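/- arXiv:2502.21175 — 5 statements merged into one kernel-verified Lean document; each statement's English description precedes it below -/
import Mathlib

section
/- Let I = (G, R, k, ℓ) be an irreducible CSMP instance with k ≥ 1, i.e., an instance in which every path of G whose internal vertices all have degree exactly 2 in G and are not terminals has at most 2k internal vertices. If G contains a path of length at least 96k², then for every vertex v of G there exist a path H in G of length exactly 48k² having v as one of its endpoints, and a vertex w on H whose degree in G is at least 3, such that both endpoints of H are at distance along H at least 16k² and at most 32k² from w (that is, H is a strong (48k²)-haven anchored at w having v as an endpoint). -/
open SimpleGraph

structure CSMP (V : Type) [Fintype V] [DecidableEq V] where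
  G : SimpleGraph V
  k : ℕ
  s : Fin k → V
  M : Finset (Fin k)
  t : Fin k → V
  ell : ℕ

variable {V : Type} [Fintype V] [DecidableEq V]

/-- The terminals of a CSMP instance: all starting vertices and the
destination vertices of robots with a destination. -/
def CSMP.terminals (I : CSMP V) : Set V :=
  Set.range I.s ∪ I.t '' (I.M : Set (Fin I.k))

/-- A valid instance: connected graph, pairwise distinct starting vertices,
pairwise distinct destination vertices. -/
def CSMP.Valid (I : CSMP V) : Prop :=
  I.G.Connected ∧ Function.Injective I.s ∧ Set.InjOn I.t (I.M : Set (Fin I.k))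

/-- The edges of a walk that is recorded as a list of consecutively visited vertices. -/
def listEdges {V : Type} (l : List V) : Set (Sym2 V) :=
  {e | ∃ ab ∈ l.zip l.tail, e = s(ab.1, ab.2)}

/-- One time step of a schedule: exactly one robot `i` slides along a simple
path `l` of `G` (recorded as the list of visited vertices, starting at the
current position of `i` and ending at its new position) while no other robot
is located on any vertex of that path; all other robots stay put.  A
stationary time step is recorded by the singleton list. -/
def StepOK (G : SimpleGraph V) {k : ℕ} (f g : Fin k → V) (l : List V) : Prop :=
  l.Chain' G.Adj ∧ l.Nodup ∧
    ∃ i : Fin k, (∀ i', i' ≠ i → g i' = f i') ∧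
      l.head? = some (f i) ∧ l.getLast? = some (g i) ∧
      ∀ i', i' ≠ i → f i' ∉ l

/-- A schedule for robots with starting positions `s` on the graph `G`:
`q` is the number of time steps, `pos j i` is the position of robot `i` at the
end of time step `j`, and `wlk j` is the path traversed by the (unique) robot
moving at time step `j+1`. -/
structure Schedule (G : SimpleGraph V) {k : ℕ} (s : Fin k → V) where
  q : ℕ
  pos : ℕ → Fin k → V
  wlk : ℕ → List V
  start : ∀ i, pos 0 i = s i
  step : ∀ j < q, StepOK G (pos j) (pos (j + 1)) (wlk j)

/-- The makespan (total number of moves) of a schedule: the number of time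
steps at which the moving robot changes vertex. -/
noncomputable def Schedule.moves {G : SimpleGraph V} {k : ℕ} {s : Fin k → V} (S : Schedule G s) : ℕ :=
  {j | j < S.q ∧ S.pos (j + 1) ≠ S.pos j}.ncard

/-- At the end of the schedule, every robot with a destination is at its destination. -/
def Completes (I : CSMP V) (S : Schedule I.G I.s) : Prop :=
  ∀ i ∈ I.M, S.pos S.q i = I.t i

/-- A solution: a schedule of makespan at most `ℓ` bringing every robot of `M`
to its destination. -/
def IsSolution (I : CSMP V) (S : Schedule I.G I.s) : Prop :=
  Completes I S ∧ S.moves ≤ I.ell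

/-- A YES-instance of CSMP. -/
def CSMP.Yes (I : CSMP V) : Prop := ∃ S : Schedule I.G I.s, IsSolution I S

/-- A strong `q`-haven anchored at `w`: a path `p` of length `q` such that `w` lies
on `p`, `w` has degree at least `3` in `G`, and both endpoints of `p` are at
distance along `p` at least `⌈q/3⌉` and at most `⌊2q/3⌋` from `w`. -/
def StrongHaven {V : Type} [DecidableEq V] (G : SimpleGraph V) (q : ℕ)
    {x y : V} (p : G.Walk x y) (w : V) : Prop :=
  p.IsPath ∧ p.length = q ∧
    ∃ h : w ∈ p.support,
      3 ≤ (G.neighborSet w).ncard ∧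
      (q + 2) / 3 ≤ (p.takeUntil w h).length ∧ (p.takeUntil w h).length ≤ 2 * q / 3 ∧
      (q + 2) / 3 ≤ (p.dropUntil w h).length ∧ (p.dropUntil w h).length ≤ 2 * q / 3

/-- An irreducible CSMP instance: every path of `G` whose internal vertices all have
degree exactly `2` in `G` and are not terminals has at most `2k` internal vertices. -/
def CSMPIrreducible (I : CSMP V) : Prop :=
  ∀ (a b : V) (p : I.G.Walk a b), p.IsPath →
    (∀ v ∈ p.support.tail.dropLast, (I.G.neighborSet v).ncard = 2 ∧ v ∉ I.terminals) →
    p.support.tail.dropLast.length ≤ 2 * I.k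


namespace SimpleGraph.Walk

variable {V' : Type*} {G : SimpleGraph V'}

@[simp] lemma getVert_nil' {u : V'} (i : ℕ) : (nil : G.Walk u u).getVert i = u := rfl

/-- Take the first `n` darts of a walk. -/
def takeW : {u v : V'} → (p : G.Walk u v) → (n : ℕ) → G.Walk u (p.getVert n)
  | _, _, nil, _ => nil
  | _, _, cons _ _, 0 => nil
  | _, _, cons h q, n + 1 => cons h (q.takeW n)

/-- Drop the first `n` darts of a walk. -/
def dropW : {u v : V'} → (p : G.Walk u v) → (n : ℕ) → G.Walk (p.getVert n) v
  | _, _, nil, _ => nil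
  | _, _, cons h q, 0 => cons h q
  | _, _, cons _ q, n + 1 => q.dropW n

@[simp] lemma takeW_length : ∀ {u v : V'} (p : G.Walk u v) (n : ℕ),
    (p.takeW n).length = min n p.length
  | _, _, nil, n => by simp [takeW]
  | _, _, cons h q, 0 => by simp [takeW]; rfl
  | _, _, cons h q, n + 1 => by
      simp [takeW, takeW_length q n, Nat.succ_min_succ]

@[simp] lemma dropW_length : ∀ {u v : V'} (p : G.Walk u v) (n : ℕ),
    (p.dropW n).length = p.length - n
  | _, _, nil, n => by simp [dropW]
  | _, _, cons h q, 0 => by simp [dropW]; rfl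
  | _, _, cons h q, n + 1 => by
      simpa [dropW] using dropW_length q n

lemma takeW_getVert : ∀ {u v : V'} (p : G.Walk u v) (n i : ℕ),
    (p.takeW n).getVert i = p.getVert (min i n)
  | _, _, nil, n, i => by simp [takeW]
  | _, _, cons h q, 0, i => by simp [takeW]; rfl
  | _, _, cons h q, n + 1, 0 => by simp [takeW]
  | _, _, cons h q, n + 1, i + 1 => by
      simpa [takeW, Nat.succ_min_succ] using takeW_getVert q n i

lemma dropW_getVert : ∀ {u v : V'} (p : G.Walk u v) (n i : ℕ),
    (p.dropW n).getVert i = p.getVert (n + i)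
  | _, _, nil, n, i => by simp [dropW]
  | _, _, cons h q, 0, i => by simp [dropW]; rfl
  | _, _, cons h q, n + 1, i => by
      have := dropW_getVert q n i
      simpa [dropW, Nat.add_right_comm] using this

lemma takeW_support_subset : ∀ {u v : V'} (p : G.Walk u v) (n : ℕ),
    (p.takeW n).support ⊆ p.support
  | _, _, nil, n => by simp [takeW]
  | _, _, cons h q, 0 => by
      simp [takeW]; intro z hz; rw [List.mem_singleton.1 hz]; simp
  | _, _, cons h q, n + 1 => by
      simpa [takeW] using List.cons_subset_cons _ (takeW_support_subset q n)

lemma isPath_takeW : ∀ {u v : V'} (p : G.Walk u v) (n : ℕ), p.IsPath → (p.takeW n).IsPath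
  | _, _, nil, n, _ => by simp only [takeW]; exact IsPath.nil
  | _, _, cons h q, 0, _ => by simp only [takeW]; exact IsPath.nil
  | _, _, cons h q, n + 1, hp => by
      rw [cons_isPath_iff] at hp
      exact (isPath_takeW q n hp.1).cons fun hmem => hp.2 (takeW_support_subset q n hmem)

lemma isPath_dropW : ∀ {u v : V'} (p : G.Walk u v) (n : ℕ), p.IsPath → (p.dropW n).IsPath
  | _, _, nil, n, hp => by simp only [dropW]; exact hp
  | _, _, cons h q, 0, hp => by simp only [dropW]; exact hp
  | _, _, cons h q, n + 1, hp => isPath_dropW q n hp.of_cons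

lemma IsPath.append_of_meet {u v w : V'} {p : G.Walk u v} {q : G.Walk v w}
    (hp : p.IsPath) (hq : q.IsPath)
    (h : ∀ x, x ∈ p.support → x ∈ q.support → x = v) : (p.append q).IsPath := by
  rw [isPath_def, support_append]
  refine List.Nodup.append hp.support_nodup (hq.support_nodup.sublist (List.tail_sublist _)) ?_
  intro x hxp hxq
  have hxv : x = v := h x hxp (List.mem_of_mem_tail hxq)
  have hvt : v ∉ q.support.tail := by
    have hcons : q.support = v :: q.support.tail := by cases q <;> simp
    have hnd := hq.support_nodup
    rw [hcons, List.nodup_cons] at hnd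
    exact hnd.1
  exact hvt (hxv ▸ hxq)

lemma getVert_mem_support' {u v : V'} (p : G.Walk u v) {i : ℕ} (hi : i ≤ p.length) :
    p.getVert i ∈ p.support :=
  mem_support_iff_exists_getVert.2 ⟨i, rfl, hi⟩

lemma isPath_getVert_inj : ∀ {u v : V'} (p : G.Walk u v) (i j : ℕ), p.IsPath →
    i ≤ p.length → j ≤ p.length → p.getVert i = p.getVert j → i = j
  | _, _, nil, i, j, _, hi, hj, _ => by
      rw [length_nil] at hi hj; omega
  | _, _, cons h q, 0, 0, _, _, _, _ => rfl
  | _, _, cons h q, 0, j + 1, hp, hi, hj, hij => by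
      rw [cons_isPath_iff] at hp
      exact absurd (getVert_mem_support' q (i := j) (by simpa using hj))
        (by rw [getVert_zero, getVert_cons_succ] at hij; rw [← hij]; exact hp.2)
  | _, _, cons h q, i + 1, 0, hp, hi, hj, hij => by
      rw [cons_isPath_iff] at hp
      exact absurd (getVert_mem_support' q (i := i) (by simpa using hi))
        (by rw [getVert_zero, getVert_cons_succ] at hij; rw [hij]; exact hp.2)
  | _, _, cons h q, i + 1, j + 1, hp, hi, hj, hij => by
      rw [cons_isPath_iff] at hp
      have := isPath_getVert_inj q i j hp.1 (by simpa using hi) (by simpa using hj)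
        (by simpa using hij)
      omega

variable [DecidableEq V']

lemma takeUntil_length_of_getVert {u v : V'} {p : G.Walk u v} (hp : p.IsPath) {j : ℕ}
    (hj : j ≤ p.length) (h : p.getVert j ∈ p.support) :
    (p.takeUntil (p.getVert j) h).length = j := by
  have hm : (p.takeUntil (p.getVert j) h).length ≤ p.length := length_takeUntil_le p h
  have h3 := getVert_append (p.takeUntil (p.getVert j) h) (p.dropUntil (p.getVert j) h)
    ((p.takeUntil (p.getVert j) h).length)
  rw [take_spec] at h3
  simp only [lt_self_iff_false, if_false, Nat.sub_self, getVert_zero] at h3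
  exact isPath_getVert_inj p _ j hp hm hj h3

lemma length_takeUntil_add_length_dropUntil {u v w : V'} (p : G.Walk u v)
    (h : w ∈ p.support) :
    (p.takeUntil w h).length + (p.dropUntil w h).length = p.length := by
  have := congrArg Walk.length (p.take_spec h)
  rwa [length_append] at this

lemma _root_.List.tail_dropLast' {A : Type*} : ∀ (l : List A), l.tail.dropLast = l.dropLast.tail
  | [] => rfl
  | [_] => rfl
  | _ :: _ :: _ => rfl

lemma support_dropLast_concat' : ∀ {u v : V'} (p : G.Walk u v),
    p.support.dropLast ++ [v] = p.support
  | _, _, nil => rfl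
  | _, _, cons h q => by
      have hne : q.support ≠ [] := q.support_ne_nil
      rw [support_cons, List.dropLast_cons_of_ne_nil hne, List.cons_append,
        support_dropLast_concat' q]

lemma internal_getVert {u v : V'} {p : G.Walk u v} (hp : p.IsPath) {x : V'}
    (hx : x ∈ p.support.tail.dropLast) :
    ∃ j, 1 ≤ j ∧ j < p.length ∧ p.getVert j = x := by
  have hxt : x ∈ p.support.tail := List.mem_of_mem_dropLast hx
  have hxs : x ∈ p.support := List.mem_of_mem_tail hxt
  have hcons : p.support = u :: p.support.tail := by cases p <;> simp
  have hnd := hp.support_nodup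
  have hxu : x ≠ u := by
    rw [hcons, List.nodup_cons] at hnd
    rintro rfl; exact hnd.1 hxt
  have hxv : x ≠ v := by
    rintro rfl
    -- v is not in dropLast of tail
    rw [List.tail_dropLast'] at hx
    have hxdl : x ∈ p.support.dropLast := List.mem_of_mem_tail hx
    have := support_dropLast_concat' p
    rw [← this] at hnd
    rcases List.nodup_append.1 hnd with ⟨-, -, hdisj⟩
    exact hdisj x hxdl x (by simp) rfl
  obtain ⟨j, hjx, hjl⟩ := mem_support_iff_exists_getVert.1 hxs
  refine ⟨j, ?_, ?_, hjx⟩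
  · rcases Nat.eq_zero_or_pos j with rfl | h1
    · rw [getVert_zero] at hjx; exact absurd hjx.symm hxu
    · exact h1
  · rcases Nat.lt_or_ge j p.length with h2 | h2
    · exact h2
    · have : j = p.length := le_antisymm hjl h2
      rw [this, getVert_length] at hjx
      exact absurd hjx.symm hxv

lemma exists_first_meet [DecidableEq V'] : ∀ {v a : V'} (q : G.Walk v a), q.IsPath →
    ∀ {a0 b0 : V'} (p : G.Walk a0 b0), a ∈ p.support →
    ∃ (x : V') (hx : x ∈ p.support) (r : G.Walk v x), r.IsPath ∧
      r.support ⊆ q.support ∧ ∀ u ∈ r.support, u ∈ p.support → u = x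
  | _, _, nil, _, _, _, p, ha =>
      ⟨_, ha, nil, IsPath.nil, by simp, by simp⟩
  | v, a, cons h q', hq, _, _, p, ha => by
      by_cases hv : v ∈ p.support
      · exact ⟨v, hv, nil, IsPath.nil, by simp, by simp⟩
      · obtain ⟨x, hx, r', hr'path, hr'sub, hr'meet⟩ := exists_first_meet q' hq.of_cons p ha
        rw [cons_isPath_iff] at hq
        refine ⟨x, hx, cons h r', hr'path.cons fun hmem => hq.2 (hr'sub hmem), ?_, ?_⟩
        · rw [support_cons, support_cons]
          exact List.cons_subset_cons _ hr'sub
        · intro z hz hzp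
          rw [support_cons, List.mem_cons] at hz
          rcases hz with rfl | hz
          · exact absurd hzp hv
          · exact hr'meet z hz hzp

end SimpleGraph.Walk

/-- In an irreducible CSMP instance with `k ≥ 1`, if `G` contains a
path of length at least `96k²`, then every vertex `v` of `G` is the endpoint of a
strong `48k²`-haven: a path `H` of length exactly `48k²` starting at `v`, anchored at
a vertex `w` of degree at least `3` in `G` whose distance along `H` from either
endpoint is at least `16k² = ⌈48k²/3⌉` and at most `32k² = ⌊2·48k²/3⌋`. -/
theorem irreducible_haven (I : CSMP V) (hval : I.Valid) (hk : 1 ≤ I.k)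
    (hirr : CSMPIrreducible I)
    (hlong : ∃ (a b : V) (p : I.G.Walk a b), p.IsPath ∧ 96 * I.k ^ 2 ≤ p.length) :
    ∀ v : V, ∃ (y : V) (p : I.G.Walk v y) (w : V),
      StrongHaven I.G (48 * I.k ^ 2) p w := by
  classical
  intro v
  obtain ⟨a, b, p, hp, hplen⟩ := hlong
  obtain ⟨K2, hK2⟩ : ∃ n, n = I.k ^ 2 := ⟨_, rfl⟩
  have hKle : I.k ≤ K2 := by
    rw [hK2, pow_two]; exact Nat.le_mul_of_pos_left _ hk
  have hK2pos : 1 ≤ K2 := le_trans hk hKle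
  rw [← hK2] at hplen ⊢
  -- Step 1: a path H0 from v of length at least 48 K2
  obtain ⟨y0, H0, hH0path, hH0len⟩ :
      ∃ (y0 : V) (H0 : I.G.Walk v y0), H0.IsPath ∧ 48 * K2 ≤ H0.length := by
    obtain ⟨q0⟩ := hval.1.preconnected v a
    obtain ⟨x, hx, r, hrpath, hrsub, hrmeet⟩ :=
      Walk.exists_first_meet (q0.toPath : I.G.Walk v a) q0.toPath.2 p p.start_mem_support
    have hsum := Walk.length_takeUntil_add_length_dropUntil p hx
    by_cases hc : 48 * K2 ≤ (p.dropUntil x hx).length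
    · refine ⟨b, r.append (p.dropUntil x hx),
        hrpath.append_of_meet (hp.dropUntil hx) (fun z hz1 hz2 =>
          hrmeet z hz1 (Walk.support_dropUntil_subset p hx hz2)), ?_⟩
      rw [Walk.length_append]; omega
    · refine ⟨a, r.append (p.takeUntil x hx).reverse,
        hrpath.append_of_meet (hp.takeUntil hx).reverse (fun z hz1 hz2 =>
          hrmeet z hz1 (Walk.support_takeUntil_subset p hx
            (by rwa [Walk.support_reverse, List.mem_reverse] at hz2))), ?_⟩
      rw [Walk.length_append, Walk.length_reverse]; omega
  -- Step 2: truncate to length exactly 48 K2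
  set H : I.G.Walk v (H0.getVert (48 * K2)) := H0.takeW (48 * K2) with hH
  have hHpath : H.IsPath := Walk.isPath_takeW H0 _ hH0path
  have hHlen : H.length = 48 * K2 := by
    rw [hH, Walk.takeW_length]; omega
  -- terminals as a finset
  set TF : Finset V := Finset.image I.s Finset.univ ∪ Finset.image I.t I.M with hTFdef
  have hTFcard : TF.card ≤ 2 * I.k := by
    calc TF.card ≤ (Finset.image I.s Finset.univ).card + (Finset.image I.t I.M).card :=
          Finset.card_union_le _ _
    _ ≤ Finset.univ.card + I.M.card :=
          add_le_add Finset.card_image_le Finset.card_image_le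
    _ ≤ I.k + I.k := add_le_add (by simp) (I.M.card_le_univ.trans (by simp))
    _ = 2 * I.k := by ring
  have hterm_sub : I.terminals ⊆ ↑TF := by
    rintro z (⟨i, rfl⟩ | ⟨i, hi, rfl⟩)
    · exact Finset.mem_coe.2 (Finset.mem_union_left _
        (Finset.mem_image_of_mem _ (Finset.mem_univ i)))
    · exact Finset.mem_coe.2 (Finset.mem_union_right _ (Finset.mem_image_of_mem _ hi))
  -- Step 3: find the anchor
  have hanchor : ∃ j, 16 * K2 ≤ j ∧ j ≤ 32 * K2 ∧
      3 ≤ (I.G.neighborSet (H.getVert j)).ncard := by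
    by_contra hcon
    push_neg at hcon
    have hdeg2 : ∀ j, 1 ≤ j → j < H.length → 2 ≤ (I.G.neighborSet (H.getVert j)).ncard := by
      intro j hj1 hj2
      have ha1 : I.G.Adj (H.getVert (j - 1)) (H.getVert j) := by
        have := H.adj_getVert_succ (i := j - 1) (by omega)
        rwa [show j - 1 + 1 = j by omega] at this
      have ha2 : I.G.Adj (H.getVert j) (H.getVert (j + 1)) := H.adj_getVert_succ hj2
      have hne : H.getVert (j - 1) ≠ H.getVert (j + 1) := by
        intro hEq
        have := Walk.isPath_getVert_inj H (j - 1) (j + 1) hHpath (by omega) (by omega) hEq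
        omega
      have hsub : ({H.getVert (j - 1), H.getVert (j + 1)} : Set V) ⊆
          I.G.neighborSet (H.getVert j) := by
        intro z hz
        simp only [Set.mem_insert_iff, Set.mem_singleton_iff] at hz
        rcases hz with rfl | rfl
        · exact ha1.symm
        · exact ha2
      calc 2 = ({H.getVert (j - 1), H.getVert (j + 1)} : Set V).ncard :=
            (Set.ncard_pair hne).symm
      _ ≤ _ := Set.ncard_le_ncard hsub (Set.toFinite _)
    set T : Finset ℕ := (Finset.Icc (16 * K2) (32 * K2)).filter
      (fun j => H.getVert j ∈ TF) with hT
    have hTcard : T.card ≤ 2 * I.k := by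
      refine le_trans (Finset.card_le_card_of_injOn (fun j => H.getVert j) ?_ ?_) hTFcard
      · intro j hj; exact (Finset.mem_filter.1 hj).2
      · intro j1 hj1 j2 hj2 hEq
        have h1 := Finset.mem_Icc.1 (Finset.mem_filter.1 (Finset.mem_coe.1 hj1)).1
        have h2 := Finset.mem_Icc.1 (Finset.mem_filter.1 (Finset.mem_coe.1 hj2)).1
        exact Walk.isPath_getVert_inj H j1 j2 hHpath (by rw [hHlen]; omega)
          (by rw [hHlen]; omega) hEq
    have hblock : ∃ m, m ≤ 2 * I.k ∧ ∀ i, i ≤ 2 * I.k →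
        H.getVert (16 * K2 + 1 + m * (2 * I.k + 1) + i) ∉ TF := by
      by_contra hb
      push_neg at hb
      have hch : ∀ m : ℕ, ∃ jm : ℕ, m ≤ 2 * I.k →
          jm ∈ T ∧ 16 * K2 + 1 + m * (2 * I.k + 1) ≤ jm ∧
            jm ≤ 16 * K2 + 1 + m * (2 * I.k + 1) + 2 * I.k := by
        intro m
        by_cases hm : m ≤ 2 * I.k
        · obtain ⟨i, hi, hmem⟩ := hb m hm
          refine ⟨16 * K2 + 1 + m * (2 * I.k + 1) + i, fun _ => ⟨?_, by omega, by omega⟩⟩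
          refine Finset.mem_filter.2 ⟨Finset.mem_Icc.2 ⟨by omega, ?_⟩, hmem⟩
          have h1 : m * (2 * I.k + 1) ≤ 2 * I.k * (2 * I.k + 1) :=
            Nat.mul_le_mul_right _ hm
          have h2 : 2 * I.k * (2 * I.k + 1) + 2 * I.k + 1 = (2 * I.k + 1) ^ 2 := by ring
          have h3 : (2 * I.k + 1) ^ 2 ≤ 16 * K2 := by rw [hK2]; nlinarith [hk]
          omega
        · exact ⟨0, fun h => absurd h hm⟩
      choose f hf using hch
      have hinj : Set.InjOn f ↑(Finset.range (2 * I.k + 1)) := by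
        intro m1 hm1 m2 hm2 hEq
        simp only [Finset.coe_range, Set.mem_Iio] at hm1 hm2
        obtain ⟨-, hl1, hu1⟩ := hf m1 (by omega)
        obtain ⟨-, hl2, hu2⟩ := hf m2 (by omega)
        by_contra hne
        rcases Nat.lt_or_ge m1 m2 with hlt | hge
        · have hmul : (m1 + 1) * (2 * I.k + 1) ≤ m2 * (2 * I.k + 1) :=
            Nat.mul_le_mul_right _ (by omega)
          have hx : (m1 + 1) * (2 * I.k + 1) = m1 * (2 * I.k + 1) + (2 * I.k + 1) := by ring
          omega
        · have hmul : (m2 + 1) * (2 * I.k + 1) ≤ m1 * (2 * I.k + 1) :=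
            Nat.mul_le_mul_right _ (by omega)
          have hx : (m2 + 1) * (2 * I.k + 1) = m2 * (2 * I.k + 1) + (2 * I.k + 1) := by ring
          omega
      have hcard := Finset.card_le_card_of_injOn f
        (fun m hm => (hf m (Nat.lt_succ_iff.mp (Finset.mem_range.1 hm))).1) hinj
      rw [Finset.card_range] at hcard
      omega
    obtain ⟨m, hm, hgood⟩ := hblock
    set c : ℕ := 16 * K2 + 1 + m * (2 * I.k + 1) with hc
    have hcub : c + 2 * I.k ≤ 32 * K2 := by
      have h1 : m * (2 * I.k + 1) ≤ 2 * I.k * (2 * I.k + 1) := Nat.mul_le_mul_right _ hm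
      have h2 : (2 * I.k + 1) ^ 2 ≤ 16 * K2 := by rw [hK2]; nlinarith [hk]
      have h3 : 2 * I.k * (2 * I.k + 1) + 2 * I.k + 1 = (2 * I.k + 1) ^ 2 := by ring
      omega
    set S := (H.dropW (c - 1)).takeW (2 * I.k + 2) with hS
    have hSpath : S.IsPath := Walk.isPath_takeW _ _ (Walk.isPath_dropW _ _ hHpath)
    have hSlen : S.length = 2 * I.k + 2 := by
      rw [hS, Walk.takeW_length, Walk.dropW_length, hHlen]; omega
    have hSget : ∀ i, i ≤ 2 * I.k + 2 → S.getVert i = H.getVert (c - 1 + i) := by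
      intro i hi
      rw [hS, Walk.takeW_getVert, Walk.dropW_getVert, min_eq_left hi]
    have hint : ∀ z ∈ S.support.tail.dropLast,
        (I.G.neighborSet z).ncard = 2 ∧ z ∉ I.terminals := by
      intro z hz
      obtain ⟨j, hj1, hj2, hjz⟩ := Walk.internal_getVert hSpath hz
      rw [hSlen] at hj2
      rw [hSget j (by omega)] at hjz
      have hpos1 : 16 * K2 ≤ c - 1 + j := by omega
      have hpos2 : c - 1 + j ≤ 32 * K2 := by omega
      constructor
      · have hlow := hdeg2 (c - 1 + j) (by omega) (by rw [hHlen]; omega)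
        have hhigh := hcon (c - 1 + j) hpos1 hpos2
        rw [hjz] at hlow hhigh
        omega
      · intro hzt
        have hzTF : z ∈ TF := hterm_sub hzt
        have hnot := hgood (j - 1) (by omega)
        rw [show 16 * K2 + 1 + m * (2 * I.k + 1) + (j - 1) = c - 1 + j by omega, hjz] at hnot
        exact hnot hzTF
    have hlen2 := hirr _ _ S hSpath hint
    have hlen3 : S.support.tail.dropLast.length = 2 * I.k + 1 := by
      rw [List.length_dropLast, List.length_tail, Walk.length_support, hSlen]
      omega
    omega
  obtain ⟨j, hj1, hj2, hdeg⟩ := hanchor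
  have hjlen : j ≤ H.length := by rw [hHlen]; omega
  have hw : H.getVert j ∈ H.support := Walk.getVert_mem_support' H hjlen
  have hTlen : (H.takeUntil (H.getVert j) hw).length = j :=
    Walk.takeUntil_length_of_getVert hHpath hjlen hw
  have hDlen : (H.dropUntil (H.getVert j) hw).length = 48 * K2 - j := by
    have := Walk.length_takeUntil_add_length_dropUntil H hw
    rw [hHlen] at this
    omega
  exact ⟨_, H, H.getVert j, hHpath, hHlen, hw, hdeg,
    by rw [hTlen]; omega, by rw [hTlen]; omega, by rw [hDlen]; omega, by rw [hDlen]; omega⟩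
end

section
/- Let I = (G, R, k, ℓ) be a CSMP instance, let d ∈ ℕ, and let X ⊆ V(G) with |X| ≤ d. If the number of connected components of G − X is greater than 3k·2^d, then there exists a connected component C of G − X containing no terminal such that: I is a YES-instance if and only if I admits a solution in which no robot ever occupies or traverses any vertex of C. -/
open SimpleGraph

variable {V : Type} [Fintype V] [DecidableEq V]

namespace CSMPaux

lemma single_of_nodup_head_last {α : Type*} {l : List α} (hnd : l.Nodup) {a : α}
    (h1 : l.head? = some a) (h2 : l.getLast? = some a) : l = [a] := by
  obtain ⟨ys, rfl⟩ := List.getLast?_eq_some_iff.mp h2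
  match ys, h1 with
  | [], _ => rfl
  | (x :: t), h1 =>
    simp only [List.cons_append, List.head?_cons, Option.some.injEq] at h1
    subst h1
    exfalso
    have : x ∈ (x :: t) ++ [x] := by simp
    have hnd' := hnd
    rw [List.nodup_append] at hnd'
    exact hnd'.2.2 x (show x ∈ x :: t by simp) x (show x ∈ [x] by simp) rfl

lemma splitFirst {α : Type*} (R : α → α → Prop) (W : Set α) :
    ∀ (l : List α), l.Chain' R → ∀ a, l.head? = some a → a ∉ W → (∃ v ∈ l, v ∈ W) →
    ∃ pr x1 u rest, l = pr ++ u :: rest ∧ (∀ v ∈ pr, v ∉ W) ∧ pr.head? = some a ∧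
      pr.getLast? = some x1 ∧ u ∈ W ∧ R x1 u
  | [], _, a, h, _, _ => by simp at h
  | [x], hch, a, h, ha, hW => by
    simp only [List.head?_cons, Option.some.injEq] at h
    subst h
    obtain ⟨v, hv, hvW⟩ := hW
    simp only [List.mem_singleton] at hv; subst hv; exact absurd hvW ha
  | x :: y :: t, hch, a, h, ha, hW => by
    simp only [List.head?_cons, Option.some.injEq] at h
    subst h
    unfold List.Chain' at hch; rw [List.isChain_cons_cons] at hch
    by_cases hy : y ∈ W
    · exact ⟨[x], x, y, t, by simp, by simpa using ha, by simp, by simp, hy, hch.1⟩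
    · have hW' : ∃ v ∈ y :: t, v ∈ W := by
        obtain ⟨v, hv, hvW⟩ := hW
        rcases List.mem_cons.mp hv with rfl | hv
        · exact absurd hvW ha
        · exact ⟨v, hv, hvW⟩
      obtain ⟨pr, x1, u, rest, heq, hprW, hprh, hprl, huW, hR⟩ :=
        splitFirst R W (y :: t) hch.2 y rfl hy hW'
      have hprne : pr ≠ [] := by rintro rfl; simp at hprh
      refine ⟨x :: pr, x1, u, rest, by rw [List.cons_append, ← heq], ?_, by simp, ?_, huW, hR⟩
      · intro v hv
        rcases List.mem_cons.mp hv with rfl | hv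
        · exact ha
        · exact hprW v hv
      · rw [List.getLast?_cons, hprl]; rfl

lemma splitLast {α : Type*} (R : α → α → Prop) (W : Set α)
    (l : List α) (hch : l.Chain' R) (b : α) (hb : l.getLast? = some b) (hbW : b ∉ W)
    (hW : ∃ v ∈ l, v ∈ W) :
    ∃ mid u x2 sf, l = mid ++ u :: sf ∧ (∀ v ∈ sf, v ∉ W) ∧ sf.head? = some x2 ∧
      sf.getLast? = some b ∧ u ∈ W ∧ R u x2 := by
  have hch' : l.reverse.Chain' (flip R) := List.isChain_reverse.mpr hch
  have hh : l.reverse.head? = some b := by rwa [List.head?_reverse]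
  obtain ⟨pr, x2, u, rest, heq, hprW, hprh, hprl, huW, hR⟩ :=
    splitFirst (flip R) W l.reverse hch' b hh hbW (by simpa using hW)
  refine ⟨rest.reverse, u, x2, pr.reverse, ?_, by simpa using hprW, ?_, ?_, huW, hR⟩
  · have := congrArg List.reverse heq
    simpa [List.reverse_append] using this
  · rwa [List.head?_reverse]
  · rwa [List.getLast?_reverse]

lemma disjoint_of_prefix_avoid {α : Type*} {l pr mid sf : List α} {w : α}
    (hnd : l.Nodup) (hpr : pr <+: l) (heq : l = mid ++ w :: sf)
    (hw : ∀ v ∈ pr, v ≠ w) : pr.Disjoint sf := by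
  have hmid : mid <+: l := ⟨w :: sf, heq.symm⟩
  rcases le_or_gt pr.length mid.length with hle | hlt
  · have hsub : pr <+: mid := List.prefix_of_prefix_length_le hpr hmid hle
    have hnd' : (mid ++ w :: sf).Nodup := heq ▸ hnd
    have hd := List.disjoint_of_nodup_append hnd'
    intro a ha ha'
    exact hd (hsub.subset ha) (List.mem_cons_of_mem _ ha')
  · exfalso
    have hmw : mid ++ [w] <+: l := ⟨sf, by rw [heq]; simp⟩
    have : mid ++ [w] <+: pr :=
      List.prefix_of_prefix_length_le hmw hpr (by simpa using hlt)
    exact hw w (this.subset (by simp)) rfl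


def UA {k : ℕ} (A : Fin (k+1) → Set V) : Set V := ⋃ m, A m

def InvP {k : ℕ} (A : Fin (k+1) → Set V) (f p : Fin k → V) : Prop :=
  ∃ σ : Fin k → Fin (k+1),
    (∀ i, f i ∈ UA A → σ i ≠ 0 ∧ p i ∈ A (σ i)) ∧
    (∀ i, f i ∉ UA A → p i = f i) ∧
    (∀ i i', i ≠ i' → f i ∈ UA A → f i' ∈ UA A → σ i ≠ σ i')

theorem step_reroute (G : SimpleGraph V) {k : ℕ} (A : Fin (k+1) → Set V)
    (H1 : ∀ m m', m ≠ m' → Disjoint (A m) (A m'))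
    (H2 : ∀ m, ∀ u ∈ A m, ∀ w ∈ A m, ∃ T : List V, T.Chain' G.Adj ∧ T.Nodup ∧
      T.head? = some u ∧ T.getLast? = some w ∧ ∀ v ∈ T, v ∈ A m)
    (H3 : ∀ m, ∀ v ∈ A m, ∀ w, w ∉ UA A → G.Adj w v → ∀ m', ∃ u ∈ A m', G.Adj w u)
    (f g p : Fin k → V) (l : List V) (hS : StepOK G f g l) (hp : InvP A f p) :
    ∃ p' l', InvP A g p' ∧ StepOK G p p' l' ∧ (∀ v ∈ l', v ∉ A 0) ∧ (g = f → p' = p) := by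
  classical
  obtain ⟨hch, hnd, i, hfix, hhead, hlast, havoid⟩ := hS
  obtain ⟨σ, hσ1, hσ2, hσ3⟩ := hp
  have hUsub : ∀ m, A m ⊆ UA A := fun m => Set.subset_iUnion A m
  have hnot0 : ∀ m, m ≠ (0 : Fin (k+1)) → ∀ v ∈ A m, v ∉ A 0 := fun m hm v hv =>
    Set.disjoint_left.mp (H1 m 0 hm) hv
  have hother : ∀ (L : List V), (∀ v ∈ L, v ∈ l) → (∀ v ∈ L, v ∉ UA A) →
      ∀ i', i' ≠ i → p i' ∉ L := by
    intro L hLl hLU i' hne hmem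
    by_cases hU' : f i' ∈ UA A
    · exact hLU _ hmem (hUsub _ (hσ1 i' hU').2)
    · exact havoid i' hne (hLl _ ((hσ2 i' hU') ▸ hmem))
  have hfree : f i ∉ UA A → ∃ m : Fin (k+1), m ≠ 0 ∧ ∀ i', p i' ∉ A m := by
    intro hfi
    have hk : 0 < k := i.pos
    have hsub : (Finset.univ.filter (fun i' => f i' ∈ UA A)) ⊆ Finset.univ.erase i := by
      intro x hx
      simp only [Finset.mem_filter] at hx
      refine Finset.mem_erase.mpr ⟨?_, Finset.mem_univ _⟩
      rintro rfl; exact hfi hx.2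
    have herase : (Finset.univ.erase i).card + 1 = k := by
      rw [Finset.card_erase_of_mem (Finset.mem_univ _)]
      simp only [Finset.card_univ, Fintype.card_fin]
      omega
    have h1 : (Finset.univ.filter (fun i' => f i' ∈ UA A)).card ≤ (Finset.univ.erase i).card :=
      Finset.card_le_card hsub
    have h2 := Finset.card_image_le (s := Finset.univ.filter (fun i' => f i' ∈ UA A)) (f := σ)
    have h3 := Finset.card_insert_le (0 : Fin (k+1))
      ((Finset.univ.filter (fun i' => f i' ∈ UA A)).image σ)
    set Bad : Finset (Fin (k+1)) :=
      insert 0 ((Finset.univ.filter (fun i' => f i' ∈ UA A)).image σ) with hBad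
    have hcard : Bad.card < k + 1 := by omega
    obtain ⟨m, hm⟩ : ∃ m, m ∉ Bad := by
      by_contra h
      push_neg at h
      have := Finset.card_le_card (fun x _ => h x) (s := Finset.univ)
      simp only [Finset.card_univ, Fintype.card_fin] at this
      omega
    have hm0 : m ≠ 0 := by rintro rfl; exact hm (Finset.mem_insert_self _ _)
    refine ⟨m, hm0, fun i' => ?_⟩
    by_cases hU' : f i' ∈ UA A
    · have hne : σ i' ≠ m := by
        rintro rfl
        exact hm (Finset.mem_insert_of_mem (Finset.mem_image_of_mem σ
          (Finset.mem_filter.mpr ⟨Finset.mem_univ _, hU'⟩)))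
      intro hmem
      exact Set.disjoint_left.mp (H1 (σ i') m hne) (hσ1 i' hU').2 hmem
    · rw [hσ2 i' hU']
      intro hmem
      exact hU' (hUsub m hmem)
  have hlne : l ≠ [] := by rintro rfl; simp at hhead
  by_cases hfU : f i ∈ UA A
  · by_cases hgU : g i ∈ UA A
    · -- Case (d): stay put
      obtain ⟨hb0, hbmem⟩ := hσ1 i hfU
      refine ⟨p, [p i], ⟨σ, ?_, ?_, ?_⟩, ⟨List.isChain_singleton _, by simp, i, fun i' _ => rfl, by simp, by simp,
        ?_⟩, ?_, fun _ => rfl⟩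
      · intro i' hgi'
        by_cases hii : i' = i
        · subst hii; exact hσ1 i' hfU
        · exact hσ1 i' (by rwa [hfix i' hii] at hgi')
      · intro i' hgi'
        by_cases hii : i' = i
        · subst hii; exact absurd hgU hgi'
        · rw [hσ2 i' (by rwa [hfix i' hii] at hgi'), hfix i' hii]
      · intro a b hab ha hb
        have ha' : f a ∈ UA A := by
          by_cases h : a = i; · subst h; exact hfU
          · rwa [hfix a h] at ha
        have hb' : f b ∈ UA A := by
          by_cases h : b = i; · subst h; exact hfU
          · rwa [hfix b h] at hb
        exact hσ3 a b hab ha' hb'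
      · intro i' hne hmem
        simp only [List.mem_singleton] at hmem
        by_cases hU' : f i' ∈ UA A
        · have hd := H1 (σ i') (σ i) (hσ3 i' i hne hU' hfU)
          exact Set.disjoint_left.mp hd (hσ1 i' hU').2 (hmem ▸ hbmem)
        · refine hU' ?_
          rw [← hσ2 i' hU', hmem]
          exact hUsub _ hbmem
      · intro v hv
        simp only [List.mem_singleton] at hv
        exact hv ▸ hnot0 _ hb0 _ hbmem
    · -- Case (c): exit from the parked component
      obtain ⟨hb0, hbmem⟩ := hσ1 i hfU
      have hWex : ∃ v ∈ l, v ∈ UA A := ⟨f i, List.mem_of_mem_head? hhead, hfU⟩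
      obtain ⟨mid, u, x2, sf, heq, hsfW, hsfh, hsfl, huW, hadj⟩ :=
        splitLast G.Adj (UA A) l hch (g i) hlast hgU hWex
      have hsfne : sf ≠ [] := by rintro rfl; simp at hsfh
      have hsfsub : ∀ v ∈ sf, v ∈ l := by
        intro v hv; rw [heq]; exact List.mem_append_right _ (List.mem_cons_of_mem _ hv)
      have hx2 : x2 ∉ UA A := hsfW _ (List.mem_of_mem_head? hsfh)
      obtain ⟨mu, humem⟩ : ∃ mu, u ∈ A mu := Set.mem_iUnion.mp huW
      obtain ⟨u2, hu2mem, hu2adj⟩ := H3 mu u humem x2 hx2 hadj.symm (σ i)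
      obtain ⟨T, hTch, hTnd, hTh, hTl, hTmem⟩ := H2 (σ i) (p i) hbmem u2 hu2mem
      have hTne : T ≠ [] := by rintro rfl; simp at hTh
      refine ⟨Function.update p i (g i), T ++ sf, ⟨σ, ?_, ?_, ?_⟩,
        ⟨?_, ?_, i, ?_, ?_, ?_, ?_⟩, ?_, ?_⟩
      · intro i' hgi'
        by_cases hii : i' = i
        · subst hii; exact absurd hgi' hgU
        · rw [Function.update_of_ne hii]
          exact hσ1 i' (by rwa [hfix i' hii] at hgi')
      · intro i' hgi'
        by_cases hii : i' = i
        · subst hii; simp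
        · rw [Function.update_of_ne hii, hσ2 i' (by rwa [hfix i' hii] at hgi'), hfix i' hii]
      · intro a b hab ha hb
        have ha' : f a ∈ UA A := by
          by_cases h : a = i; · subst h; exact absurd ha hgU
          · rwa [hfix a h] at ha
        have hb' : f b ∈ UA A := by
          by_cases h : b = i; · subst h; exact absurd hb hgU
          · rwa [hfix b h] at hb
        exact hσ3 a b hab ha' hb'
      · -- chain'
        refine hTch.append (hch.suffix ⟨mid ++ [u], by rw [heq]; simp⟩) ?_
        intro x hx y hy
        rw [hTl] at hx; rw [hsfh] at hy
        simp only [Option.mem_some_iff] at hx hy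
        subst hx; subst hy
        exact hu2adj.symm
      · -- nodup
        refine (hTnd.append ((heq ▸ hnd).sublist
          ((List.sublist_cons_self u sf).trans (List.sublist_append_right mid (u :: sf)))) ?_)
        intro a ha ha'
        exact hsfW a ha' (hUsub _ (hTmem a ha))
      · intro i' hii; rw [Function.update_of_ne hii]
      · rw [List.head?_append_of_ne_nil _ hTne, hTh]
      · rw [List.getLast?_append_of_ne_nil _ hsfne, hsfl]; simp
      · -- other robots not on the walk
        intro i' hne hmem
        rcases List.mem_append.mp hmem with hmem | hmem
        · by_cases hU' : f i' ∈ UA A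
          · have hd := H1 (σ i') (σ i) (hσ3 i' i hne hU' hfU)
            exact Set.disjoint_left.mp hd (hσ1 i' hU').2 (hTmem _ hmem)
          · exact hU' (hσ2 i' hU' ▸ hUsub _ (hTmem _ hmem))
        · exact hother sf hsfsub hsfW i' hne hmem
      · intro v hv
        rcases List.mem_append.mp hv with hv | hv
        · exact hnot0 _ hb0 _ (hTmem _ hv)
        · exact fun h0 => hsfW _ hv (hUsub 0 h0)
      · intro hgf; exact absurd (hgf ▸ hfU : g i ∈ UA A) hgU
  · have hpi : p i = f i := hσ2 i hfU
    by_cases hgU : g i ∈ UA A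
    · -- Case (b): park into a free component
      obtain ⟨m, hm0, hmfree⟩ := hfree hfU
      have hWex : ∃ v ∈ l, v ∈ UA A :=
        ⟨g i, List.mem_of_getLast? hlast, hgU⟩
      obtain ⟨pr, x1, u, rest, heq, hprW, hprh, hprl, huW, hadj⟩ :=
        splitFirst G.Adj (UA A) l hch (f i) hhead hfU hWex
      have hprne : pr ≠ [] := by rintro rfl; simp at hprh
      have hprsub : ∀ v ∈ pr, v ∈ l := by
        intro v hv; rw [heq]; exact List.mem_append_left _ hv
      have hx1 : x1 ∉ UA A := hprW _ (List.mem_of_getLast? hprl)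
      obtain ⟨mu, humem⟩ : ∃ mu, u ∈ A mu := Set.mem_iUnion.mp huW
      obtain ⟨ub, hubmem, hubadj⟩ := H3 mu u humem x1 hx1 hadj m
      refine ⟨Function.update p i ub, pr ++ [ub], ⟨Function.update σ i m, ?_, ?_, ?_⟩,
        ⟨?_, ?_, i, ?_, ?_, ?_, ?_⟩, ?_, ?_⟩
      · intro i' hgi'
        by_cases hii : i' = i
        · subst hii; simp [hm0, hubmem]
        · rw [Function.update_of_ne hii, Function.update_of_ne hii]
          exact hσ1 i' (by rwa [hfix i' hii] at hgi')
      · intro i' hgi'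
        by_cases hii : i' = i
        · subst hii; exact absurd hgU hgi'
        · rw [Function.update_of_ne hii, hσ2 i' (by rwa [hfix i' hii] at hgi'), hfix i' hii]
      · intro a b hab ha hb
        by_cases hA : a = i
        · subst hA
          have hbne : b ≠ a := Ne.symm hab
          have hb' : f b ∈ UA A := by rwa [hfix b hbne] at hb
          rw [Function.update_self, Function.update_of_ne hbne]
          intro hEq
          have := (hσ1 b hb').2
          rw [← hEq] at this
          exact hmfree b this
        · by_cases hB : b = i
          · subst hB
            have ha' : f a ∈ UA A := by rwa [hfix a hA] at ha
            rw [Function.update_of_ne hA, Function.update_self]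
            intro hEq
            have := (hσ1 a ha').2
            rw [hEq] at this
            exact hmfree a this
          · rw [Function.update_of_ne hA, Function.update_of_ne hB]
            exact hσ3 a b hab (by rwa [hfix a hA] at ha) (by rwa [hfix b hB] at hb)
      · -- chain'
        refine (hch.prefix ⟨u :: rest, heq.symm⟩).append (by simp) ?_
        intro x hx y hy
        rw [hprl] at hx
        simp only [List.head?_cons, Option.mem_some_iff] at hx hy
        subst hx; subst hy
        exact hubadj
      · refine ((heq ▸ hnd).sublist (List.prefix_append _ _).sublist).append (by simp) ?_
        intro a ha ha'
        simp only [List.mem_singleton] at ha'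
        exact hprW a ha (ha' ▸ hUsub _ hubmem)
      · intro i' hii; rw [Function.update_of_ne hii]
      · rw [List.head?_append_of_ne_nil _ hprne, hprh, hpi]
      · rw [List.getLast?_append_of_ne_nil _ (by simp)]; simp
      · intro i' hne hmem
        rcases List.mem_append.mp hmem with hmem | hmem
        · exact hother pr hprsub hprW i' hne hmem
        · simp only [List.mem_singleton] at hmem
          exact hmfree i' (hmem ▸ hubmem)
      · intro v hv
        rcases List.mem_append.mp hv with hv | hv
        · exact fun h0 => hprW _ hv (hUsub 0 h0)
        · simp only [List.mem_singleton] at hv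
          exact hv ▸ hnot0 _ hm0 _ hubmem
      · intro hgf; exact absurd (hgf ▸ hgU : f i ∈ UA A) hfU
    · -- Case (a)
      by_cases hlU : ∃ v ∈ l, v ∈ UA A
      · obtain ⟨m, hm0, hmfree⟩ := hfree hfU
        obtain ⟨pr, x1, u, rest, heq, hprW, hprh, hprl, huW, hadjl⟩ :=
          splitFirst G.Adj (UA A) l hch (f i) hhead hfU hlU
        obtain ⟨mid, w, x2, sf, heq2, hsfW, hsfh, hsfl, hwW, hadjr⟩ :=
          splitLast G.Adj (UA A) l hch (g i) hlast hgU hlU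
        have hprne : pr ≠ [] := by rintro rfl; simp at hprh
        have hsfne : sf ≠ [] := by rintro rfl; simp at hsfh
        have hprsub : ∀ v ∈ pr, v ∈ l := by
          intro v hv; rw [heq]; exact List.mem_append_left _ hv
        have hsfsub : ∀ v ∈ sf, v ∈ l := by
          intro v hv; rw [heq2]; exact List.mem_append_right _ (List.mem_cons_of_mem _ hv)
        have hx1 : x1 ∉ UA A := hprW _ (List.mem_of_getLast? hprl)
        have hx2 : x2 ∉ UA A := hsfW _ (List.mem_of_mem_head? hsfh)
        obtain ⟨mu, humem⟩ : ∃ mu, u ∈ A mu := Set.mem_iUnion.mp huW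
        obtain ⟨mw, hwmem⟩ : ∃ mw, w ∈ A mw := Set.mem_iUnion.mp hwW
        obtain ⟨u1, hu1mem, hu1adj⟩ := H3 mu u humem x1 hx1 hadjl m
        obtain ⟨u2, hu2mem, hu2adj⟩ := H3 mw w hwmem x2 hx2 hadjr.symm m
        obtain ⟨T, hTch, hTnd, hTh, hTl, hTmem⟩ := H2 m u1 hu1mem u2 hu2mem
        have hTne : T ≠ [] := by rintro rfl; simp at hTh
        have hdisj : pr.Disjoint sf :=
          disjoint_of_prefix_avoid hnd ⟨u :: rest, heq.symm⟩ heq2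
            (fun v hv hvw => hprW v hv (hvw ▸ hwW))
        refine ⟨Function.update p i (g i), pr ++ (T ++ sf), ⟨σ, ?_, ?_, ?_⟩,
          ⟨?_, ?_, i, ?_, ?_, ?_, ?_⟩, ?_, ?_⟩
        · intro i' hgi'
          by_cases hii : i' = i
          · subst hii; exact absurd hgi' hgU
          · rw [Function.update_of_ne hii]
            exact hσ1 i' (by rwa [hfix i' hii] at hgi')
        · intro i' hgi'
          by_cases hii : i' = i
          · subst hii; simp
          · rw [Function.update_of_ne hii, hσ2 i' (by rwa [hfix i' hii] at hgi'), hfix i' hii]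
        · intro a b hab ha hb
          have ha' : f a ∈ UA A := by
            by_cases h : a = i; · subst h; exact absurd ha hgU
            · rwa [hfix a h] at ha
          have hb' : f b ∈ UA A := by
            by_cases h : b = i; · subst h; exact absurd hb hgU
            · rwa [hfix b h] at hb
          exact hσ3 a b hab ha' hb'
        · -- chain'
          refine (hch.prefix ⟨u :: rest, heq.symm⟩).append
            (hTch.append (hch.suffix ⟨mid ++ [w], by rw [heq2]; simp⟩) ?_) ?_
          · intro x hx y hy
            rw [hTl] at hx; rw [hsfh] at hy
            simp only [Option.mem_some_iff] at hx hy
            subst hx; subst hy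
            exact hu2adj.symm
          · intro x hx y hy
            rw [hprl] at hx
            rw [List.head?_append_of_ne_nil _ hTne, hTh] at hy
            simp only [Option.mem_some_iff] at hx hy
            subst hx; subst hy
            exact hu1adj
        · -- nodup
          have hprnd : pr.Nodup := (heq ▸ hnd).sublist (List.prefix_append _ _).sublist
          have hsfnd : sf.Nodup := (heq2 ▸ hnd).sublist
            ((List.sublist_cons_self w sf).trans (List.sublist_append_right mid (w :: sf)))
          refine hprnd.append (hTnd.append hsfnd ?_) ?_
          · intro a ha ha'
            exact hsfW a ha' (hUsub _ (hTmem a ha))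
          · intro a ha ha'
            rcases List.mem_append.mp ha' with h | h
            · exact hprW a ha (hUsub _ (hTmem a h))
            · exact hdisj ha h
        · intro i' hii; rw [Function.update_of_ne hii]
        · rw [List.head?_append_of_ne_nil _ hprne, hprh, hpi]
        · rw [List.getLast?_append_of_ne_nil _ (by simp [hsfne]),
            List.getLast?_append_of_ne_nil _ hsfne, hsfl]; simp
        · intro i' hne hmem
          rcases List.mem_append.mp hmem with hmem | hmem
          · exact hother pr hprsub hprW i' hne hmem
          rcases List.mem_append.mp hmem with hmem | hmem
          · exact hmfree i' (hTmem _ hmem)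
          · exact hother sf hsfsub hsfW i' hne hmem
        · intro v hv
          rcases List.mem_append.mp hv with hv | hv
          · exact fun h0 => hprW _ hv (hUsub 0 h0)
          rcases List.mem_append.mp hv with hv | hv
          · exact hnot0 _ hm0 _ (hTmem _ hv)
          · exact fun h0 => hsfW _ hv (hUsub 0 h0)
        · intro hgf
          funext i'
          by_cases hii : i' = i
          · subst hii; rw [Function.update_self, hpi]
            exact congrFun hgf i'
          · rw [Function.update_of_ne hii]
      · -- Case (a1): the walk avoids U entirely
        push_neg at hlU
        refine ⟨Function.update p i (g i), l, ⟨σ, ?_, ?_, ?_⟩,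
          ⟨hch, hnd, i, ?_, ?_, ?_, ?_⟩, ?_, ?_⟩
        · intro i' hgi'
          by_cases hii : i' = i
          · subst hii; exact absurd hgi' hgU
          · rw [Function.update_of_ne hii]
            exact hσ1 i' (by rwa [hfix i' hii] at hgi')
        · intro i' hgi'
          by_cases hii : i' = i
          · subst hii; simp
          · rw [Function.update_of_ne hii, hσ2 i' (by rwa [hfix i' hii] at hgi'), hfix i' hii]
        · intro a b hab ha hb
          have ha' : f a ∈ UA A := by
            by_cases h : a = i; · subst h; exact absurd ha hgU
            · rwa [hfix a h] at ha
          have hb' : f b ∈ UA A := by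
            by_cases h : b = i; · subst h; exact absurd hb hgU
            · rwa [hfix b h] at hb
          exact hσ3 a b hab ha' hb'
        · intro i' hii; rw [Function.update_of_ne hii]
        · rw [hhead, hpi]
        · rw [hlast]; simp
        · intro i' hne hmem
          exact hother l (fun v hv => hv) hlU i' hne hmem
        · intro v hv
          exact fun h0 => hlU _ hv (hUsub 0 h0)
        · intro hgf
          funext i'
          by_cases hii : i' = i
          · subst hii; rw [Function.update_self, hpi]
            exact congrFun hgf i'
          · rw [Function.update_of_ne hii]



theorem simulate (G : SimpleGraph V) {k : ℕ} (s : Fin k → V) (S : Schedule G s)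
    (Inv : ℕ → (Fin k → V) → Prop) (P : ℕ → List V → Prop)
    (h0 : Inv 0 s)
    (hstep : ∀ j, j < S.q → ∀ p, Inv j p → ∃ p' l', Inv (j+1) p' ∧ StepOK G p p' l' ∧ P j l' ∧
      (S.pos (j+1) = S.pos j → p' = p)) :
    ∃ S' : Schedule G s, S'.q = S.q ∧ (∀ j, j ≤ S.q → Inv j (S'.pos j)) ∧
      (∀ j, j < S.q → P j (S'.wlk j)) ∧
      (∀ j, j < S.q → S.pos (j+1) = S.pos j → S'.pos (j+1) = S'.pos j) := by
  classical
  have key : ∀ j (p : Fin k → V), ∃ (p' : Fin k → V) (l' : List V),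
      (j < S.q → Inv j p → Inv (j+1) p' ∧ StepOK G p p' l' ∧ P j l' ∧
        (S.pos (j+1) = S.pos j → p' = p)) ∧ (¬ (j < S.q ∧ Inv j p) → p' = p) := by
    intro j p
    by_cases h : j < S.q
    · by_cases hi : Inv j p
      · obtain ⟨p', l', h1, h2, h3, h4⟩ := hstep j h p hi
        exact ⟨p', l', fun _ _ => ⟨h1, h2, h3, h4⟩, fun hc => absurd ⟨h, hi⟩ hc⟩
      · exact ⟨p, [], fun _ hi' => absurd hi' hi, fun _ => rfl⟩
    · exact ⟨p, [], fun h' => absurd h' h, fun _ => rfl⟩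
  choose nxt wk hkey _hfreeze using key
  let pos' : ℕ → Fin k → V := fun j => Nat.rec s (fun j ih => nxt j ih) j
  have hposS : ∀ j, pos' (j+1) = nxt j (pos' j) := fun _ => rfl
  have hinv : ∀ j, j ≤ S.q → Inv j (pos' j) := by
    intro j
    induction j with
    | zero => intro _; exact h0
    | succ j ih =>
      intro hj
      have hj' : j < S.q := hj
      rw [hposS j]
      exact (hkey j (pos' j) hj' (ih (le_of_lt hj'))).1
  refine ⟨⟨S.q, pos', fun j => wk j (pos' j), fun i => rfl, ?_⟩, rfl, hinv, ?_, ?_⟩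
  · intro j hj
    have h := hkey j (pos' j) hj (hinv j (le_of_lt hj))
    rw [hposS j]
    exact h.2.1
  · intro j hj
    exact (hkey j (pos' j) hj (hinv j (le_of_lt hj))).2.2.1
  · intro j hj hmove
    exact (hposS j).trans ((hkey j (pos' j) hj (hinv j (le_of_lt hj))).2.2.2 hmove)



lemma adj_mem_supp {s : Set V} {G : SimpleGraph V} {D : (G.induce s).ConnectedComponent}
    {v w : V} (hv : v ∈ Subtype.val '' D.supp) (hw : w ∈ s) (hadj : G.Adj v w) :
    w ∈ Subtype.val '' D.supp := by
  obtain ⟨⟨v, hvs⟩, hvD, rfl⟩ := hv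
  refine ⟨⟨w, hw⟩, ?_, rfl⟩
  rw [ConnectedComponent.mem_supp_iff] at hvD ⊢
  rw [← hvD]
  exact ConnectedComponent.sound
    (Adj.reachable (by simpa using hadj.symm : (G.induce s).Adj ⟨w, hw⟩ ⟨v, hvs⟩))

lemma path_in_supp {s : Set V} {G : SimpleGraph V} {D : (G.induce s).ConnectedComponent}
    {u w : V} (hu : u ∈ Subtype.val '' D.supp) (hw : w ∈ Subtype.val '' D.supp) :
    ∃ T : List V, T.Chain' G.Adj ∧ T.Nodup ∧ T.head? = some u ∧ T.getLast? = some w ∧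
      ∀ v ∈ T, v ∈ Subtype.val '' D.supp := by
  classical
  obtain ⟨u', hu'D, rfl⟩ := hu
  obtain ⟨w', hw'D, rfl⟩ := hw
  rw [ConnectedComponent.mem_supp_iff] at hu'D hw'D
  have hreach : (G.induce s).Reachable u' w' :=
    ConnectedComponent.exact (hu'D.trans hw'D.symm)
  obtain ⟨W⟩ := hreach
  let P := W.toPath
  refine ⟨P.1.support.map Subtype.val, ?_, ?_, ?_, ?_, ?_⟩
  · exact List.isChain_map_of_isChain _ (fun a b hab => by simpa using hab) P.1.isChain_adj_support
  · exact P.2.support_nodup.map Subtype.val_injective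
  · rw [List.head?_map, List.head?_eq_head P.1.support_ne_nil]
    simp [P.1.head_support]
  · rw [List.getLast?_map, List.getLast?_eq_getLast P.1.support_ne_nil]
    simp [P.1.getLast_support]
  · intro v hv
    simp only [List.mem_map] at hv
    obtain ⟨z, hz, rfl⟩ := hv
    obtain ⟨q, r, _⟩ := Walk.mem_support_iff_exists_append.mp hz
    refine ⟨z, ?_, rfl⟩
    rw [ConnectedComponent.mem_supp_iff, ← hu'D]
    exact (ConnectedComponent.sound ⟨q⟩).symm

end CSMPaux


/-- If `X` is a set of at most `d` vertices of a CSMP instance and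
`G − X` has more than `3k·2^d` connected components, then some connected component
`C` of `G − X` contains no terminal and is such that the instance is a YES-instance
if and only if it admits a solution in which no robot ever occupies or traverses
any vertex of `C`. -/
theorem irrelevant_component (I : CSMP V) (hval : I.Valid) (d : ℕ)
    (X : Finset V) (hX : X.card ≤ d)
    (hcomp : 3 * I.k * 2 ^ d <
      Nat.card ((I.G.induce ((↑X : Set V)ᶜ)).ConnectedComponent)) :
    ∃ C : (I.G.induce ((↑X : Set V)ᶜ)).ConnectedComponent,
      (∀ v ∈ Subtype.val '' C.supp, v ∉ I.terminals) ∧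
      (I.Yes ↔ ∃ S : Schedule I.G I.s, IsSolution I S ∧
        (∀ j ≤ S.q, ∀ i : Fin I.k, S.pos j i ∉ Subtype.val '' C.supp) ∧
        (∀ j < S.q, ∀ v ∈ S.wlk j, v ∉ Subtype.val '' C.supp)) := by
  classical
  haveI : Finite ((I.G.induce ((↑X : Set V)ᶜ)).ConnectedComponent) :=
    Quot.finite _
  haveI : Fintype ((I.G.induce ((↑X : Set V)ᶜ)).ConnectedComponent) := Fintype.ofFinite _
  set nbhd : (I.G.induce ((↑X : Set V)ᶜ)).ConnectedComponent → Finset V :=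
    fun D => X.filter (fun x => ∃ u ∈ Subtype.val '' D.supp, I.G.Adj x u) with hnbhd
  -- pigeonhole: many components with the same neighbourhood
  have hmaps : ∀ D ∈ (Finset.univ : Finset ((I.G.induce ((↑X : Set V)ᶜ)).ConnectedComponent)),
      nbhd D ∈ X.powerset := fun D _ => Finset.mem_powerset.mpr (Finset.filter_subset _ _)
  have hcard : X.powerset.card * (3 * I.k) <
      (Finset.univ : Finset ((I.G.induce ((↑X : Set V)ᶜ)).ConnectedComponent)).card := by
    rw [Finset.card_powerset]
    calc 2 ^ X.card * (3 * I.k) ≤ 2 ^ d * (3 * I.k) := by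
          have : (2:ℕ) ^ X.card ≤ 2 ^ d := Nat.pow_le_pow_right (by norm_num) hX
          exact Nat.mul_le_mul_right _ this
      _ = 3 * I.k * 2 ^ d := by ring
      _ < Nat.card ((I.G.induce ((↑X : Set V)ᶜ)).ConnectedComponent) := hcomp
      _ = Finset.univ.card := by rw [Nat.card_eq_fintype_card, Finset.card_univ]
  obtain ⟨N, -, hN⟩ := Finset.exists_lt_card_fiber_of_mul_lt_card_of_maps_to hmaps hcard
  -- components with a terminal are few
  set TF : Finset V := (Finset.univ.image I.s) ∪ (I.M.image I.t) with hTF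
  have hTFcard : TF.card ≤ 2 * I.k := by
    calc TF.card ≤ (Finset.univ.image I.s).card + (I.M.image I.t).card :=
          Finset.card_union_le _ _
      _ ≤ I.k + I.k := by
          refine Nat.add_le_add ?_ ?_
          · exact (Finset.card_image_le).trans (by simp)
          · exact (Finset.card_image_le).trans ((Finset.card_le_card (Finset.subset_univ _)).trans (by simp))
      _ = 2 * I.k := by ring
  have hterm_sub : I.terminals ⊆ (↑TF : Set V) := by
    rintro v (⟨i, rfl⟩ | ⟨i, hi, rfl⟩)
    · exact Finset.mem_coe.mpr (Finset.mem_union_left _ (Finset.mem_image_of_mem _ (Finset.mem_univ _)))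
    · exact Finset.mem_coe.mpr (Finset.mem_union_right _ (Finset.mem_image_of_mem _ hi))
  -- disjointness of distinct supports
  have hsuppd : ∀ (D D' : (I.G.induce ((↑X : Set V)ᶜ)).ConnectedComponent) (v : V),
      v ∈ Subtype.val '' D.supp → v ∈ Subtype.val '' D'.supp → D = D' := by
    rintro D D' v ⟨⟨v₁, hv₁⟩, hD, rfl⟩ ⟨⟨v₂, hv₂⟩, hD', hv⟩
    rw [SimpleGraph.ConnectedComponent.mem_supp_iff] at hD hD'
    have : (⟨v₂, hv₂⟩ : ((↑X : Set V)ᶜ : Set V)) = ⟨v₁, hv₁⟩ := Subtype.ext hv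
    rw [this] at hD'
    rw [← hD, ← hD']
  set B : Finset ((I.G.induce ((↑X : Set V)ᶜ)).ConnectedComponent) :=
    Finset.univ.filter (fun D => ∃ v ∈ Subtype.val '' D.supp, v ∈ I.terminals) with hB
  have hBcard : B.card ≤ 2 * I.k := by
    have hchoice : ∀ D : {x // x ∈ B}, ∃ v, v ∈ Subtype.val '' (D.1).supp ∧ v ∈ I.terminals := by
      intro D
      have := (Finset.mem_filter.mp D.2).2
      simpa using this
    choose τ hτ1 hτ2 using hchoice
    have hinj : Set.InjOn τ (↑(B.attach) : Set {x // x ∈ B}) := by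
      intro a _ b _ hab
      have hv1 := hτ1 a
      have hv2 := hτ1 b
      rw [hab] at hv1
      exact Subtype.ext (hsuppd _ _ _ hv2 hv1).symm
    have hmaps2 : ∀ D ∈ B.attach, τ D ∈ TF := fun D _ => hterm_sub (hτ2 D)
    have hle := Finset.card_le_card_of_injOn τ hmaps2 hinj
    calc B.card = B.attach.card := Finset.card_attach.symm
      _ ≤ TF.card := hle
      _ ≤ 2 * I.k := hTFcard
  -- the good components
  set Gd : Finset ((I.G.induce ((↑X : Set V)ᶜ)).ConnectedComponent) :=
    Finset.univ.filter (fun D => nbhd D = N ∧ ∀ v ∈ Subtype.val '' D.supp, v ∉ I.terminals)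
    with hGd
  have hGdcard : I.k + 1 ≤ Gd.card := by
    have hsplit : Finset.univ.filter (fun D => nbhd D = N) ⊆ Gd ∪ B := by
      intro D hD
      rw [Finset.mem_filter] at hD
      rcases Classical.em (∃ v ∈ Subtype.val '' D.supp, v ∈ I.terminals) with h | h
      · exact Finset.mem_union_right _ (Finset.mem_filter.mpr ⟨Finset.mem_univ _, h⟩)
      · push_neg at h
        exact Finset.mem_union_left _ (Finset.mem_filter.mpr ⟨Finset.mem_univ _, hD.2, h⟩)
    have := (Finset.card_le_card hsplit).trans (Finset.card_union_le _ _)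
    omega
  obtain ⟨Sb, hSbsub, hSbcard⟩ := Finset.exists_subset_card_eq hGdcard
  set Dm : Fin (I.k+1) → (I.G.induce ((↑X : Set V)ᶜ)).ConnectedComponent :=
    fun m => (Sb.equivFin.symm ((finCongr hSbcard.symm) m)).val with hDm
  have hDminj : Function.Injective Dm := by
    intro a b hab
    have h1 := Subtype.val_injective hab
    have h2 := Sb.equivFin.symm.injective h1
    exact (finCongr hSbcard.symm).injective h2
  have hDmGd : ∀ m, Dm m ∈ Gd := fun m => hSbsub (Sb.equivFin.symm _).2
  have hDmN : ∀ m, nbhd (Dm m) = N := fun m => (Finset.mem_filter.mp (hDmGd m)).2.1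
  have hDmfree : ∀ m, ∀ v ∈ Subtype.val '' (Dm m).supp, v ∉ I.terminals :=
    fun m => (Finset.mem_filter.mp (hDmGd m)).2.2
  set A : Fin (I.k+1) → Set V := fun m => Subtype.val '' (Dm m).supp with hA
  have H1 : ∀ m m', m ≠ m' → Disjoint (A m) (A m') := by
    intro m m' hmm
    rw [Set.disjoint_left]
    intro v hv hv'
    exact hmm (hDminj (hsuppd _ _ v hv hv'))
  have H2 : ∀ m, ∀ u ∈ A m, ∀ w ∈ A m, ∃ T : List V, T.Chain' I.G.Adj ∧ T.Nodup ∧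
      T.head? = some u ∧ T.getLast? = some w ∧ ∀ v ∈ T, v ∈ A m :=
    fun m u hu w hw => CSMPaux.path_in_supp hu hw
  have H3 : ∀ m, ∀ v ∈ A m, ∀ w, w ∉ CSMPaux.UA A → I.G.Adj w v →
      ∀ m', ∃ u ∈ A m', I.G.Adj w u := by
    intro m v hv w hw hadj m'
    have hwX : w ∈ X := by
      by_contra hwX
      have hws : w ∈ ((↑X : Set V)ᶜ) := by simpa using hwX
      have : w ∈ A m := CSMPaux.adj_mem_supp hv hws hadj.symm
      exact hw (Set.mem_iUnion.mpr ⟨m, this⟩)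
    have hwn : w ∈ nbhd (Dm m) := by
      rw [hnbhd]
      exact Finset.mem_filter.mpr ⟨hwX, v, hv, hadj⟩
    rw [hDmN m, ← hDmN m', hnbhd] at hwn
    exact (Finset.mem_filter.mp hwn).2
  have hAU : ∀ m, A m ⊆ CSMPaux.UA A := fun m => Set.subset_iUnion A m
  refine ⟨Dm 0, hDmfree 0, ?_, ?_⟩
  · -- forward direction
    rintro ⟨S, hScomp, hSmoves⟩
    have h0 : CSMPaux.InvP A (S.pos 0) I.s := by
      refine ⟨fun _ => 0, ?_, ?_, ?_⟩
      · intro i hi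
        exfalso
        obtain ⟨m, hm⟩ := Set.mem_iUnion.mp hi
        rw [S.start i] at hm
        exact hDmfree m _ hm (Or.inl ⟨i, rfl⟩)
      · intro i _
        exact (S.start i).symm
      · intro i i' _ hi _
        exfalso
        obtain ⟨m, hm⟩ := Set.mem_iUnion.mp hi
        rw [S.start i] at hm
        exact hDmfree m _ hm (Or.inl ⟨i, rfl⟩)
    have hstep : ∀ j, j < S.q → ∀ p, CSMPaux.InvP A (S.pos j) p →
        ∃ p' l', CSMPaux.InvP A (S.pos (j+1)) p' ∧ StepOK I.G p p' l' ∧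
          (∀ v ∈ l', v ∉ A 0) ∧ (S.pos (j+1) = S.pos j → p' = p) :=
      fun j hj p hp =>
        CSMPaux.step_reroute I.G A H1 H2 H3 (S.pos j) (S.pos (j+1)) p (S.wlk j)
          (S.step j hj) hp
    obtain ⟨S', hq, hinv, hP, hnm⟩ := CSMPaux.simulate I.G I.s S _ _ h0 hstep
    have hpos_avoid : ∀ j, j ≤ S.q → ∀ i, S'.pos j i ∉ A 0 := by
      intro j hj i hbad
      obtain ⟨σ, h1, h2, h3⟩ := hinv j hj
      by_cases hU : S.pos j i ∈ CSMPaux.UA A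
      · obtain ⟨hσ0, hmem⟩ := h1 i hU
        exact Set.disjoint_left.mp (H1 (σ i) 0 hσ0) hmem hbad
      · rw [h2 i hU] at hbad
        exact hU (hAU 0 hbad)
    refine ⟨S', ⟨?_, ?_⟩, ?_, ?_⟩
    · -- completes
      intro i hi
      obtain ⟨σ, h1, h2, h3⟩ := hinv S.q le_rfl
      have hti : S.pos S.q i = I.t i := hScomp i hi
      have htU : S.pos S.q i ∉ CSMPaux.UA A := by
        intro hU
        obtain ⟨m, hm⟩ := Set.mem_iUnion.mp hU
        rw [hti] at hm
        exact hDmfree m _ hm (Or.inr ⟨i, hi, rfl⟩)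
      rw [hq, h2 i htU, hti]
    · -- makespan
      refine le_trans ?_ hSmoves
      unfold Schedule.moves
      refine le_trans (Set.ncard_le_ncard ?_ ?_) le_rfl
      · intro j hj
        simp only [Set.mem_setOf_eq, hq] at hj ⊢
        refine ⟨hj.1, ?_⟩
        intro hSeq
        exact hj.2 (hnm j hj.1 hSeq)
      · exact (Set.finite_Iio S.q).subset (fun j hj => hj.1)
    · intro j hj i
      rw [hq] at hj
      exact hpos_avoid j hj i
    · intro j hj v hv
      rw [hq] at hj
      exact hP j hj v hv
  · rintro ⟨S, hsol, -, -⟩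
    exact ⟨S, hsol⟩
end

section
/- Let G be a finite connected simple graph, k ∈ ℕ, and let H_w be a strong q-haven in G anchored at a vertex w, where q ≥ 3(k+1). Then there exist three connected subgraphs C₁, C₂, C₃ of G such that: (i) the vertex sets of any two of them intersect exactly in {w}; (ii) |V(C₁)| ≥ k+1, |V(C₂)| ≥ k+1, and |V(C₃)| ≥ 2; (iii) every vertex of H_w belongs to V(C₁) ∪ V(C₂) ∪ V(C₃); and (iv) every vertex of V(C₁) ∪ V(C₂) ∪ V(C₃) is at distance at most q from w in the graph whose edge set is E(C₁) ∪ E(C₂) ∪ E(C₃). -/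
open SimpleGraph

private lemma ncard_support {V : Type} [DecidableEq V] {G : SimpleGraph V} {x y : V}
    {P : G.Walk x y} (hP : P.IsPath) : ({z | z ∈ P.support} : Set V).ncard = P.length + 1 := by
  rw [← List.coe_toFinset, Set.ncard_coe_finset, List.toFinset_card_of_nodup hP.support_nodup,
    Walk.length_support]

private lemma transfer_walk {V : Type} {G : SimpleGraph V} {U : Set (Sym2 V)} {w z : V} {q : ℕ}
    (wk : G.Walk w z) (hl : wk.length ≤ q) (he : ∀ e ∈ wk.edges, e ∈ U) :
    ∃ wk' : (fromEdgeSet U).Walk w z, wk'.length ≤ q := by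
  refine ⟨wk.transfer _ fun e hew => ?_, by rw [Walk.length_transfer]; exact hl⟩
  rw [edgeSet_fromEdgeSet]
  exact ⟨he e hew, G.not_isDiag_of_mem_edgeSet (wk.edges_subset_edgeSet hew)⟩

private lemma side_split {V : Type} [Fintype V] [DecidableEq V] {G : SimpleGraph V}
    {w a x u : V} (ha : G.Adj w a) (Q' : G.Walk a x)
    (hQ : (Walk.cons ha Q').IsPath)
    (hua : u ≠ a) (huw : u ≠ w) (hadj : G.Adj w u) :
    ∃ A B : G.Subgraph, A.Connected ∧ B.Connected ∧
      A.verts ∩ B.verts = {w} ∧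
      A.verts ∪ B.verts = insert u {z | z ∈ (Walk.cons ha Q').support} ∧
      Q'.length + 1 ≤ A.verts.ncard ∧ 2 ≤ B.verts.ncard ∧
      ∀ z ∈ A.verts ∪ B.verts, ∃ wk : G.Walk w z, wk.length ≤ Q'.length + 1 ∧
        ∀ e ∈ wk.edges, e ∈ A.edgeSet ∪ B.edgeSet := by
  have hQ' : Q'.IsPath := hQ.of_cons
  have hwQ' : w ∉ Q'.support := ((Walk.cons_isPath_iff ha Q').mp hQ).2
  by_cases hu : u ∈ Q'.support
  · -- the chord case: u lies on the path
    obtain ⟨a2, haa2, T', hT⟩ := Walk.not_nil_iff.mp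
      (Walk.not_nil_of_ne (fun h => hua h.symm) (p := Q'.takeUntil u hu))
    have hspec := Q'.take_spec hu
    rw [hT] at hspec
    set D := Q'.dropUntil u hu with hD
    rw [Walk.cons_append] at hspec
    -- membership in Q'.support
    have hmemQ' : ∀ z, z ∈ Q'.support ↔ z = a ∨ z ∈ T'.support ∨ z ∈ D.support := by
      intro z
      rw [← hspec]
      simp [Walk.mem_support_append_iff]
    -- nodup facts
    have hnd : Q'.support.Nodup := hQ'.support_nodup
    rw [← hspec] at hnd
    simp only [Walk.support_cons, List.nodup_cons, Walk.mem_support_append_iff] at hnd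
    push_neg at hnd
    obtain ⟨⟨haT', haD⟩, hndTD⟩ := hnd
    have hwT' : w ∉ T'.support := fun h => hwQ' ((hmemQ' w).mpr (Or.inr (Or.inl h)))
    have hwD : w ∉ D.support := fun h => hwQ' ((hmemQ' w).mpr (Or.inr (Or.inr h)))
    have hwa : w ≠ a := ha.ne
    have huT' : u ∈ T'.support := T'.end_mem_support
    -- the two subgraphs
    set W : G.Walk w x := Walk.cons hadj ((T'.reverse.append T').append D) with hW
    refine ⟨W.toSubgraph, (Walk.cons ha Walk.nil).toSubgraph,
      W.toSubgraph_connected, Walk.toSubgraph_connected _, ?_, ?_, ?_, ?_, ?_⟩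
    · -- intersection
      ext z
      simp only [Walk.verts_toSubgraph, hW, Set.mem_inter_iff, Set.mem_setOf_eq,
        Walk.support_cons, Walk.support_nil, List.mem_cons, List.not_mem_nil, or_false, Walk.mem_support_append_iff,
        Walk.support_reverse, List.mem_reverse, List.mem_singleton, Set.mem_singleton_iff]
      constructor
      · rintro ⟨h1, h2 | h2⟩
        · exact h2
        · subst h2
          rcases h1 with h | h | h
          · exact absurd h.symm hwa
          · exact absurd (Or.elim h id id) haT'
          · exact absurd h haD
      · rintro rfl; exact ⟨Or.inl rfl, Or.inl rfl⟩
    · -- union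
      ext z
      simp only [Walk.verts_toSubgraph, hW, Set.mem_union, Set.mem_setOf_eq,
        Walk.support_cons, Walk.support_nil, List.mem_cons, List.not_mem_nil, or_false, Walk.mem_support_append_iff,
        Walk.support_reverse, List.mem_reverse, List.mem_singleton, Set.mem_insert_iff,
        Set.mem_setOf_eq, hmemQ']
      constructor
      · rintro ((h | (h | h) | h) | (h | h)) <;> tauto
      · rintro (rfl | h | h) <;> tauto
    · -- card of A
      have hAverts : W.toSubgraph.verts
          = {z | z ∈ (Walk.cons ha Q').support} \ {a} := by
        ext z
        simp only [Walk.verts_toSubgraph, hW, Set.mem_setOf_eq, Walk.support_cons,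
          List.mem_cons, Walk.mem_support_append_iff, Walk.support_reverse,
          List.mem_reverse, Set.mem_diff, Set.mem_singleton_iff, hmemQ']
        constructor
        · rintro (h | (h | h) | h)
          · exact ⟨Or.inl h, h ▸ fun hh => hwa hh⟩
          · exact ⟨Or.inr (Or.inr (Or.inl h)), fun hh => haT' (hh ▸ h)⟩
          · exact ⟨Or.inr (Or.inr (Or.inl h)), fun hh => haT' (hh ▸ h)⟩
          · exact ⟨Or.inr (Or.inr (Or.inr h)), fun hh => haD (hh ▸ h)⟩
        · rintro ⟨h | h | h | h, hne⟩ <;> tauto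
      rw [hAverts, Set.ncard_diff_singleton_of_mem (by simp [hmemQ']),
        ncard_support hQ]
      simp
    · -- card of B
      have : (Walk.cons ha Walk.nil).toSubgraph.verts = {w, a} := by
        ext z; simp [Walk.verts_toSubgraph]
      rw [this, Set.ncard_pair hwa]
    · -- walks
      intro z hz
      have hedgeA : ∀ e, e ∈ W.edges → e ∈ W.toSubgraph.edgeSet := by
        intro e he; rw [Walk.mem_edges_toSubgraph]; exact he
      have hWedges : ∀ e, (e = s(w,u) ∨ e ∈ T'.edges ∨ e ∈ D.edges) → e ∈ W.edges := by
        intro e he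
        simp only [hW, Walk.edges_cons, Walk.edges_append, Walk.edges_reverse, List.mem_cons,
          List.mem_append, List.mem_reverse]
        tauto
      have hTlen : T'.length + 1 ≤ Q'.length := by
        have := Q'.length_takeUntil_le hu
        rw [hT] at this
        simpa using this
      have hDlen : D.length ≤ Q'.length := by
        have := congrArg Walk.length hspec
        simp only [Walk.length_cons, Walk.length_append] at this
        omega
      simp only [Set.mem_union, Walk.verts_toSubgraph, Set.mem_setOf_eq, hW,
        Walk.support_cons, Walk.support_nil, List.mem_cons, List.not_mem_nil, or_false, Walk.mem_support_append_iff,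
        Walk.support_reverse, List.mem_reverse, List.mem_singleton] at hz
      rcases hz with (rfl | (h | h) | h) | (rfl | rfl)
      · exact ⟨Walk.nil, by simp, by simp⟩
      · -- z ∈ T'.support
        have hz' : z ∈ T'.reverse.support := by
          rw [Walk.support_reverse, List.mem_reverse]; exact h
        refine ⟨Walk.cons hadj (T'.reverse.takeUntil z hz'), ?_, ?_⟩
        · have := T'.reverse.length_takeUntil_le hz'
          rw [Walk.length_reverse] at this
          simp only [Walk.length_cons]
          omega
        · intro e he
          simp only [Walk.edges_cons, List.mem_cons] at he
          rcases he with rfl | he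
          · exact Or.inl (hedgeA _ (hWedges _ (Or.inl rfl)))
          · have := T'.reverse.edges_takeUntil_subset hz' he
            rw [Walk.edges_reverse, List.mem_reverse] at this
            exact Or.inl (hedgeA _ (hWedges _ (Or.inr (Or.inl this))))
      · -- z ∈ T'.support (again)
        have hz' : z ∈ T'.reverse.support := by
          rw [Walk.support_reverse, List.mem_reverse]; exact h
        refine ⟨Walk.cons hadj (T'.reverse.takeUntil z hz'), ?_, ?_⟩
        · have := T'.reverse.length_takeUntil_le hz'
          rw [Walk.length_reverse] at this
          simp only [Walk.length_cons]
          omega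
        · intro e he
          simp only [Walk.edges_cons, List.mem_cons] at he
          rcases he with rfl | he
          · exact Or.inl (hedgeA _ (hWedges _ (Or.inl rfl)))
          · have := T'.reverse.edges_takeUntil_subset hz' he
            rw [Walk.edges_reverse, List.mem_reverse] at this
            exact Or.inl (hedgeA _ (hWedges _ (Or.inr (Or.inl this))))
      · -- z ∈ D.support
        refine ⟨Walk.cons hadj (D.takeUntil z h), ?_, ?_⟩
        · have := D.length_takeUntil_le h
          simp only [Walk.length_cons]
          omega
        · intro e he
          simp only [Walk.edges_cons, List.mem_cons] at he
          rcases he with rfl | he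
          · exact Or.inl (hedgeA _ (hWedges _ (Or.inl rfl)))
          · exact Or.inl (hedgeA _ (hWedges _ (Or.inr (Or.inr (D.edges_takeUntil_subset h he)))))
      · -- z = w (from B)
        exact ⟨Walk.nil, by simp, by simp⟩
      · -- z = a
        refine ⟨Walk.cons ha Walk.nil, by simp, ?_⟩
        intro e he
        simp only [Walk.edges_cons, Walk.edges_nil, List.mem_cons, List.not_mem_nil,
          or_false] at he
        subst he
        refine Or.inr ?_
        rw [Walk.mem_edges_toSubgraph]
        simp
  · -- easy case : u not on the path
    have husupp : u ∉ (Walk.cons ha Q').support := by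
      simp only [Walk.support_cons, List.mem_cons]
      rintro (h | h)
      exacts [huw h, hu h]
    refine ⟨(Walk.cons ha Q').toSubgraph, (Walk.cons hadj Walk.nil).toSubgraph,
      Walk.toSubgraph_connected _, Walk.toSubgraph_connected _, ?_, ?_, ?_, ?_, ?_⟩
    · ext z
      simp only [Walk.verts_toSubgraph, Set.mem_inter_iff, Set.mem_setOf_eq,
        Walk.support_cons, Walk.support_nil, List.mem_cons, List.not_mem_nil, or_false, List.mem_singleton,
        Set.mem_singleton_iff]
      constructor
      · rintro ⟨h1, rfl | rfl⟩
        · rfl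
        · rcases h1 with h | h
          · exact absurd h huw
          · exact absurd h hu
      · rintro rfl
        exact ⟨Or.inl rfl, Or.inl rfl⟩
    · ext z
      simp only [Walk.verts_toSubgraph, Set.mem_union, Set.mem_setOf_eq, Walk.support_cons,
        Walk.support_nil, List.mem_cons, List.not_mem_nil, or_false, List.mem_singleton, Set.mem_insert_iff]
      tauto
    · have : (Walk.cons ha Q').toSubgraph.verts = {z | z ∈ (Walk.cons ha Q').support} :=
        Walk.verts_toSubgraph _
      rw [this, ncard_support hQ]
      simp [Walk.length_cons]
    · have : (Walk.cons hadj Walk.nil).toSubgraph.verts = {w, u} := by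
        ext z; simp [Walk.verts_toSubgraph]
      rw [this, Set.ncard_pair (fun h => huw h.symm)]
    · intro z hz
      simp only [Set.mem_union, Walk.verts_toSubgraph, Set.mem_setOf_eq, Walk.support_cons,
        Walk.support_nil, List.mem_cons, List.not_mem_nil, or_false, List.mem_singleton] at hz
      rcases hz with h | rfl | rfl
      · -- z on the path
        have hz' : z ∈ (Walk.cons ha Q').support := by simpa [Walk.support_cons] using h
        refine ⟨(Walk.cons ha Q').takeUntil z hz', ?_, ?_⟩
        · have := (Walk.cons ha Q').length_takeUntil_le hz'
          simpa using this
        · intro e he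
          exact Or.inl (by
            rw [Walk.mem_edges_toSubgraph]
            exact (Walk.cons ha Q').edges_takeUntil_subset hz' he)
      · exact ⟨Walk.nil, by simp, by simp⟩
      · refine ⟨Walk.cons hadj Walk.nil, by simp, ?_⟩
        intro e he
        simp only [Walk.edges_cons, Walk.edges_nil, List.mem_cons, List.not_mem_nil,
          or_false] at he
        subst he
        exact Or.inr (by rw [Walk.mem_edges_toSubgraph]; simp)


/-- If `H_w` (the path `p`) is a strong `q`-haven of a finite
connected graph `G` anchored at `w`, where `q ≥ 3(k+1)`, then there are three
connected subgraphs `C₁, C₂, C₃` of `G` such that (i) the vertex sets of any two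
of them intersect exactly in `{w}`, (ii) `|V(C₁)| ≥ k+1`, `|V(C₂)| ≥ k+1` and
`|V(C₃)| ≥ 2`, (iii) every vertex of the haven lies in `V(C₁) ∪ V(C₂) ∪ V(C₃)`,
and (iv) every vertex of `V(C₁) ∪ V(C₂) ∪ V(C₃)` is at distance at most `q` from
`w` in the graph whose edge set is `E(C₁) ∪ E(C₂) ∪ E(C₃)`. -/
theorem haven_split {V : Type} [Fintype V] [DecidableEq V] (G : SimpleGraph V)
    (hconn : G.Connected) (k q : ℕ) (hq : 3 * (k + 1) ≤ q)
    {x y : V} (p : G.Walk x y) (w : V) (hhav : StrongHaven G q p w) :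
    ∃ C₁ C₂ C₃ : G.Subgraph,
      C₁.Connected ∧ C₂.Connected ∧ C₃.Connected ∧
      C₁.verts ∩ C₂.verts = {w} ∧ C₁.verts ∩ C₃.verts = {w} ∧
      C₂.verts ∩ C₃.verts = {w} ∧
      k + 1 ≤ C₁.verts.ncard ∧ k + 1 ≤ C₂.verts.ncard ∧ 2 ≤ C₃.verts.ncard ∧
      (∀ z ∈ p.support, z ∈ C₁.verts ∪ C₂.verts ∪ C₃.verts) ∧
      (∀ z ∈ C₁.verts ∪ C₂.verts ∪ C₃.verts,
        ∃ wk : (SimpleGraph.fromEdgeSet (C₁.edgeSet ∪ C₂.edgeSet ∪ C₃.edgeSet)).Walk w z,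
          wk.length ≤ q) := by
  obtain ⟨hp, hlen, hmem, hdeg, h1a, h1b, h2a, h2b⟩ := hhav
  have hp1 : (p.takeUntil w hmem).IsPath := hp.takeUntil hmem
  have hp2 : (p.dropUntil w hmem).IsPath := hp.dropUntil hmem
  have hsum : (p.takeUntil w hmem).length + (p.dropUntil w hmem).length = q := by
    have := congrArg Walk.length (p.take_spec hmem)
    rw [Walk.length_append] at this
    omega
  have hl1 : k + 1 ≤ (p.takeUntil w hmem).length := by omega
  have hl2 : k + 1 ≤ (p.dropUntil w hmem).length := by omega
  -- supports of the two halves intersect exactly in w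
  have hint : ∀ z, z ∈ (p.takeUntil w hmem).support →
      z ∈ (p.dropUntil w hmem).support → z = w := by
    intro z hz1 hz2
    by_contra hne
    have hnd := hp.support_nodup
    rw [← p.take_spec hmem, Walk.support_append] at hnd
    have hz2' : z ∈ (p.dropUntil w hmem).support.tail := by
      have hc := (p.dropUntil w hmem).support_eq_cons
      rw [hc] at hz2
      rcases List.mem_cons.mp hz2 with h | h
      · exact absurd h hne
      · exact h
    exact (List.disjoint_of_nodup_append hnd) hz1 hz2'
  have hwmem1 : w ∈ (p.takeUntil w hmem).support := Walk.end_mem_support _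
  have hwmem2 : w ∈ (p.dropUntil w hmem).support := Walk.start_mem_support _
  -- coverage of p.support
  have hcov : ∀ z ∈ p.support,
      z ∈ (p.takeUntil w hmem).support ∨ z ∈ (p.dropUntil w hmem).support := by
    intro z hz
    rw [← p.take_spec hmem, Walk.mem_support_append_iff] at hz
    exact hz
  -- decompose the two halves
  have hnn1 : ¬ (p.takeUntil w hmem).reverse.Nil := by
    rw [Walk.not_nil_iff_lt_length, Walk.length_reverse]; omega
  have hnn2 : ¬ (p.dropUntil w hmem).Nil := by
    rw [Walk.not_nil_iff_lt_length]; omega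
  obtain ⟨a, hwa, Q1', hQ1⟩ := Walk.not_nil_iff.mp hnn1
  obtain ⟨b, hwb, Q2', hQ2⟩ := Walk.not_nil_iff.mp hnn2
  -- pick a third neighbour
  have hex : ∃ u, G.Adj w u ∧ u ≠ a ∧ u ≠ b := by
    by_contra hcon
    push_neg at hcon
    have hsub : G.neighborSet w ⊆ {a, b} := by
      intro v hv
      by_cases hva : v = a
      · exact Or.inl hva
      · exact Or.inr (hcon v hv hva)
    have hle := Set.ncard_le_ncard hsub (Set.toFinite _)
    have h2 : ({a, b} : Set V).ncard ≤ 2 := by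
      refine le_trans (Set.ncard_insert_le _ _) ?_
      simp
    omega
  obtain ⟨u, hu, hua, hub⟩ := hex
  have huw : u ≠ w := fun h => G.irrefl (h ▸ hu)
  by_cases hu2 : u ∈ (p.dropUntil w hmem).support
  · -- split the second half
    have hp2' : (Walk.cons hwb Q2').IsPath := hQ2 ▸ hp2
    obtain ⟨A, B, hAc, hBc, hABi, hABu, hAcard, hBcard, hABwalk⟩ :=
      side_split hwb Q2' hp2' hub huw hu
    rw [← hQ2] at hABu
    have hQ2len : (p.dropUntil w hmem).length = Q2'.length + 1 := by
      rw [hQ2, Walk.length_cons]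
    have hABu' : A.verts ∪ B.verts = {z | z ∈ (p.dropUntil w hmem).support} := by
      rw [hABu]
      apply Set.insert_eq_self.mpr
      exact hu2
    have hwA : w ∈ A.verts := by
      have : w ∈ ({w} : Set V) := rfl
      rw [← hABi] at this
      exact this.1
    have hwB : w ∈ B.verts := by
      have : w ∈ ({w} : Set V) := rfl
      rw [← hABi] at this
      exact this.2
    have hAsub : A.verts ⊆ {z | z ∈ (p.dropUntil w hmem).support} := by
      rw [← hABu']
      exact Set.subset_union_left
    have hBsub : B.verts ⊆ {z | z ∈ (p.dropUntil w hmem).support} := by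
      rw [← hABu']
      exact Set.subset_union_right
    refine ⟨(p.takeUntil w hmem).toSubgraph, A, B,
      Walk.toSubgraph_connected _, hAc, hBc, ?_, ?_, hABi, ?_, ?_, hBcard, ?_, ?_⟩
    · -- C1 ∩ C2
      ext z
      simp only [Walk.verts_toSubgraph, Set.mem_inter_iff, Set.mem_setOf_eq,
        Set.mem_singleton_iff]
      constructor
      · rintro ⟨h1, h2⟩
        exact hint z h1 (hAsub h2)
      · rintro rfl
        exact ⟨hwmem1, hwA⟩
    · -- C1 ∩ C3
      ext z
      simp only [Walk.verts_toSubgraph, Set.mem_inter_iff, Set.mem_setOf_eq,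
        Set.mem_singleton_iff]
      constructor
      · rintro ⟨h1, h2⟩
        exact hint z h1 (hBsub h2)
      · rintro rfl
        exact ⟨hwmem1, hwB⟩
    · -- card C1
      rw [Walk.verts_toSubgraph, ncard_support hp1]
      omega
    · -- card C2
      omega
    · -- coverage
      intro z hz
      rcases hcov z hz with h | h
      · exact Or.inl (Or.inl (by rwa [Walk.mem_verts_toSubgraph]))
      · have : z ∈ A.verts ∪ B.verts := by rw [hABu']; exact h
        rcases this with h' | h'
        · exact Or.inl (Or.inr h')
        · exact Or.inr h'
    · -- distances
      intro z hz
      rcases hz with (h | h) | h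
      · -- z on first half
        rw [Walk.mem_verts_toSubgraph] at h
        have hz' : z ∈ (p.takeUntil w hmem).reverse.support := by
          rw [Walk.support_reverse, List.mem_reverse]; exact h
        refine transfer_walk ((p.takeUntil w hmem).reverse.takeUntil z hz') ?_ ?_
        · have := (p.takeUntil w hmem).reverse.length_takeUntil_le hz'
          rw [Walk.length_reverse] at this
          omega
        · intro e he
          have := (p.takeUntil w hmem).reverse.edges_takeUntil_subset hz' he
          rw [Walk.edges_reverse, List.mem_reverse] at this
          exact Or.inl (Or.inl (by rw [Walk.mem_edges_toSubgraph]; exact this))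
      · -- z in A
        obtain ⟨wk, hwk1, hwk2⟩ := hABwalk z (Or.inl h)
        refine transfer_walk wk ?_ ?_
        · omega
        · intro e he
          rcases hwk2 e he with h' | h'
          · exact Or.inl (Or.inr h')
          · exact Or.inr h'
      · -- z in B
        obtain ⟨wk, hwk1, hwk2⟩ := hABwalk z (Or.inr h)
        refine transfer_walk wk ?_ ?_
        · omega
        · intro e he
          rcases hwk2 e he with h' | h'
          · exact Or.inl (Or.inr h')
          · exact Or.inr h'
  · -- split the first half (u may or may not be on it)
    have hp1' : (Walk.cons hwa Q1').IsPath := hQ1 ▸ hp1.reverse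
    obtain ⟨A, B, hAc, hBc, hABi, hABu, hAcard, hBcard, hABwalk⟩ :=
      side_split hwa Q1' hp1' hua huw hu
    rw [← hQ1] at hABu
    have hQ1len : (p.takeUntil w hmem).length = Q1'.length + 1 := by
      rw [← Walk.length_reverse, hQ1, Walk.length_cons]
    have hrev : {z | z ∈ (p.takeUntil w hmem).reverse.support}
        = {z | z ∈ (p.takeUntil w hmem).support} := by
      ext z; simp [Walk.support_reverse]
    rw [hrev] at hABu
    have hwA : w ∈ A.verts := by
      have : w ∈ ({w} : Set V) := rfl
      rw [← hABi] at this
      exact this.1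
    have hwB : w ∈ B.verts := by
      have : w ∈ ({w} : Set V) := rfl
      rw [← hABi] at this
      exact this.2
    have hAsub : A.verts ⊆ insert u {z | z ∈ (p.takeUntil w hmem).support} := by
      rw [← hABu]
      exact Set.subset_union_left
    have hBsub : B.verts ⊆ insert u {z | z ∈ (p.takeUntil w hmem).support} := by
      rw [← hABu]
      exact Set.subset_union_right
    have hkey : ∀ z, z ∈ insert u {z | z ∈ (p.takeUntil w hmem).support} →
        z ∈ (p.dropUntil w hmem).support → z = w := by
      rintro z (rfl | hz) hz2
      · exact absurd hz2 hu2
      · exact hint z hz hz2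
    refine ⟨A, (p.dropUntil w hmem).toSubgraph, B,
      hAc, Walk.toSubgraph_connected _, hBc, ?_, hABi, ?_, ?_, ?_, hBcard, ?_, ?_⟩
    · -- C1 ∩ C2
      ext z
      simp only [Walk.verts_toSubgraph, Set.mem_inter_iff, Set.mem_setOf_eq,
        Set.mem_singleton_iff]
      constructor
      · rintro ⟨h1, h2⟩
        exact hkey z (hAsub h1) h2
      · rintro rfl
        exact ⟨hwA, hwmem2⟩
    · -- C2 ∩ C3
      ext z
      simp only [Walk.verts_toSubgraph, Set.mem_inter_iff, Set.mem_setOf_eq,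
        Set.mem_singleton_iff]
      constructor
      · rintro ⟨h1, h2⟩
        exact hkey z (hBsub h2) h1
      · rintro rfl
        exact ⟨hwmem2, hwB⟩
    · -- card C1
      omega
    · -- card C2
      rw [Walk.verts_toSubgraph, ncard_support hp2]
      omega
    · -- coverage
      intro z hz
      rcases hcov z hz with h | h
      · have : z ∈ A.verts ∪ B.verts := by
          rw [hABu]; exact Or.inr h
        rcases this with h' | h'
        · exact Or.inl (Or.inl h')
        · exact Or.inr h'
      · exact Or.inl (Or.inr (by rwa [Walk.mem_verts_toSubgraph]))
    · -- distances
      intro z hz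
      rcases hz with (h | h) | h
      · -- z in A
        obtain ⟨wk, hwk1, hwk2⟩ := hABwalk z (Or.inl h)
        refine transfer_walk wk ?_ ?_
        · omega
        · intro e he
          rcases hwk2 e he with h' | h'
          · exact Or.inl (Or.inl h')
          · exact Or.inr h'
      · -- z on second half
        rw [Walk.mem_verts_toSubgraph] at h
        refine transfer_walk ((p.dropUntil w hmem).takeUntil z h) ?_ ?_
        · have := (p.dropUntil w hmem).length_takeUntil_le h
          omega
        · intro e he
          exact Or.inl (Or.inr (by
            rw [Walk.mem_edges_toSubgraph]
            exact (p.dropUntil w hmem).edges_takeUntil_subset h he))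
      · -- z in B
        obtain ⟨wk, hwk1, hwk2⟩ := hABwalk z (Or.inr h)
        refine transfer_walk wk ?_ ?_
        · omega
        · intro e he
          rcases hwk2 e he with h' | h'
          · exact Or.inl (Or.inl h')
          · exact Or.inr h'
end

section
/- There exists a constant c > 0 such that the following holds. Let (G, R, k, ℓ) be a CSMP instance with k ≥ 1 robots, let q satisfy 3(k+1) ≤ q ≤ 24k², let H_w be a strong q-haven in G anchored at w, let F be any set of three edges of G incident on w, and let Ĥ_w be the union of H_w and F. Suppose at the current time every robot located on a vertex of Ĥ_w in fact lies on a vertex of H_w, and let S be the set of these robots with current placement ι (an injection from S into V(H_w)). Then for every injection ι′ from S into V(H_w), the robots of S can be brought from placement ι to placement ι′ by a sequence of at most c·k⁶ sliding moves, each of which moves one robot of S along a path of Ĥ_w containing no other robot at that time, while all robots outside S remain stationary. -/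
open SimpleGraph

namespace HavenAbs

/-- One abstract move of tokens on the board `{0..q} ∪ {ρ}` with junction `t`. -/
def AMove (q t ρ : ℕ) {s : ℕ} (A B : Fin s → ℕ) : Prop :=
  ∃ r : Fin s, (∀ i, i ≠ r → B i = A i) ∧
    ((A r ≤ q ∧ B r ≤ q ∧
        ∀ i, i ≠ r → A i < min (A r) (B r) ∨ max (A r) (B r) < A i)
      ∨ (A r = t ∧ B r = ρ ∧ ∀ i, i ≠ r → A i ≠ t ∧ A i ≠ ρ)
      ∨ (A r = ρ ∧ B r = t ∧ ∀ i, i ≠ r → A i ≠ t ∧ A i ≠ ρ))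

def AChain (q t ρ : ℕ) {s : ℕ} (m : ℕ) (A B : Fin s → ℕ) : Prop :=
  ∃ g : ℕ → Fin s → ℕ, g 0 = A ∧ g m = B ∧ ∀ j < m, AMove q t ρ (g j) (g (j + 1))

variable {q t ρ s : ℕ}

lemma achain_zero (A : Fin s → ℕ) : AChain q t ρ 0 A A :=
  ⟨fun _ => A, rfl, rfl, by omega⟩

lemma achain_trans {m₁ m₂ : ℕ} {A B C : Fin s → ℕ}
    (h₁ : AChain q t ρ m₁ A B) (h₂ : AChain q t ρ m₂ B C) :
    AChain q t ρ (m₁ + m₂) A C := by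
  obtain ⟨g₁, hg10, hg1m, hg1⟩ := h₁
  obtain ⟨g₂, hg20, hg2m, hg2⟩ := h₂
  refine ⟨fun j => if j ≤ m₁ then g₁ j else g₂ (j - m₁), by simp [hg10], ?_, ?_⟩
  · by_cases h : m₂ = 0
    · subst h; simp only [Nat.add_zero, le_refl, if_true, hg1m]; rw [← hg20, hg2m]
    · have : ¬ (m₁ + m₂ ≤ m₁) := by omega
      simp only [this, if_false]
      rw [Nat.add_sub_cancel_left, hg2m]
  · intro j hj
    rcases lt_trichotomy j m₁ with h | h | h
    · have h1 : j ≤ m₁ := le_of_lt h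
      by_cases h2 : j + 1 ≤ m₁
      · simpa [h1, h2] using hg1 j h
      · have : j + 1 = m₁ := by omega
        simp only [h1, if_true, h2, if_false]
        have e : g₂ (j + 1 - m₁) = g₁ (j+1) := by
          rw [this]; simp [hg1m, hg20]
        rw [e]; exact hg1 j h
    · subst h
      have h2 : ¬ (j + 1 ≤ j) := by omega
      simp only [le_refl, if_true, h2, if_false]
      have e : j + 1 - j = 1 := by omega
      rw [e, hg1m, ← hg20]
      exact hg2 0 (by omega)
    · have h1 : ¬ (j ≤ m₁) := by omega
      have h2 : ¬ (j + 1 ≤ m₁) := by omega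
      simp only [h1, h2, if_false]
      have e : j + 1 - m₁ = (j - m₁) + 1 := by omega
      rw [e]
      exact hg2 (j - m₁) (by omega)

lemma achain_single {A B : Fin s → ℕ} (h : AMove q t ρ A B) : AChain q t ρ 1 A B :=
  ⟨fun j => if j = 0 then A else B, by simp, by simp, by
    intro j hj
    have : j = 0 := by omega
    subst this; simpa using h⟩

lemma amove_symm {A B : Fin s → ℕ} (h : AMove q t ρ A B) : AMove q t ρ B A := by
  obtain ⟨r, hoth, hc⟩ := h
  refine ⟨r, fun i hi => (hoth i hi).symm, ?_⟩
  rcases hc with ⟨h1, h2, h3⟩ | ⟨h1, h2, h3⟩ | ⟨h1, h2, h3⟩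
  · exact Or.inl ⟨h2, h1, fun i hi => by
      rw [hoth i hi]
      have := h3 i hi
      omega⟩
  · exact Or.inr (Or.inr ⟨h2, h1, fun i hi => by rw [hoth i hi]; exact h3 i hi⟩)
  · exact Or.inr (Or.inl ⟨h2, h1, fun i hi => by rw [hoth i hi]; exact h3 i hi⟩)

lemma achain_symm {m : ℕ} {A B : Fin s → ℕ} (h : AChain q t ρ m A B) :
    AChain q t ρ m B A := by
  obtain ⟨g, hg0, hgm, hg⟩ := h
  refine ⟨fun j => g (m - j), by simpa, by simpa, fun j hj => ?_⟩
  have e : m - j = (m - (j+1)) + 1 := by omega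
  simp only []
  rw [e]
  exact amove_symm (hg (m - (j+1)) (by omega))

lemma amove_reindex (e : Equiv.Perm (Fin s)) {A B : Fin s → ℕ}
    (h : AMove q t ρ A B) : AMove q t ρ (A ∘ e) (B ∘ e) := by
  obtain ⟨r, hoth, hc⟩ := h
  refine ⟨e.symm r, fun i hi => hoth (e i) (by
    intro hc'; exact hi (by rw [← hc']; simp)), ?_⟩
  have hr : e (e.symm r) = r := e.apply_symm_apply r
  rcases hc with ⟨h1, h2, h3⟩ | ⟨h1, h2, h3⟩ | ⟨h1, h2, h3⟩
  · exact Or.inl ⟨by simpa [hr], by simpa [hr], fun i hi => by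
      simpa [hr] using h3 (e i) (by intro hc'; exact hi (by rw [← hc']; simp))⟩
  · exact Or.inr (Or.inl ⟨by simpa [hr], by simpa [hr], fun i hi => by
      simpa [hr] using h3 (e i) (by intro hc'; exact hi (by rw [← hc']; simp))⟩)
  · exact Or.inr (Or.inr ⟨by simpa [hr], by simpa [hr], fun i hi => by
      simpa [hr] using h3 (e i) (by intro hc'; exact hi (by rw [← hc']; simp))⟩)

lemma achain_reindex (e : Equiv.Perm (Fin s)) {m : ℕ} {A B : Fin s → ℕ}
    (h : AChain q t ρ m A B) : AChain q t ρ m (A ∘ e) (B ∘ e) := by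
  obtain ⟨g, hg0, hgm, hg⟩ := h
  exact ⟨fun j => g j ∘ e, by simp only []; rw [hg0], by simp only []; rw [hgm],
    fun j hj => amove_reindex e (hg j hj)⟩


/-- Order-preserving retargeting of sorted tokens on the path `[0,q]`,
in `2*s` moves (one real or null move per token per pass). -/
lemma lemA {a b : Fin s → ℕ} (ha : StrictMono a) (hb : StrictMono b)
    (haq : ∀ i, a i ≤ q) (hbq : ∀ i, b i ≤ q) :
    AChain q t ρ (2 * s) a b := by
  classical
  have hmono : ∀ x y : Fin s, (x : ℕ) < (y : ℕ) → a x < a y ∧ b x < b y :=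
    fun x y h => ⟨ha (Fin.lt_def.2 h), hb (Fin.lt_def.2 h)⟩
  refine ⟨fun j i => if (b i ≤ a i ∧ (i : ℕ) < j) ∨ (a i < b i ∧ 2 * s - j ≤ (i : ℕ))
      then b i else a i, ?_, ?_, ?_⟩
  · funext i
    have hi := i.isLt
    dsimp only
    rw [if_neg]; omega
  · funext i
    have hi := i.isLt
    dsimp only
    rw [if_pos]; omega
  · intro j hj
    by_cases hjs : j < s
    · -- pass 1 : token j (a left-mover or null move)
      refine ⟨⟨j, hjs⟩, ?_, Or.inl ⟨?_, ?_, ?_⟩⟩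
      · intro i hi
        have hv : (i : ℕ) ≠ j := fun h => hi (Fin.ext h)
        have hil := i.isLt
        dsimp only
        split_ifs <;> first | rfl | omega
      · dsimp only; split_ifs <;> first | exact haq _ | exact hbq _
      · dsimp only; split_ifs <;> first | exact haq _ | exact hbq _
      · intro i hi
        have hv : (i : ℕ) ≠ j := fun h => hi (Fin.ext h)
        have hil := i.isLt
        rcases Nat.lt_or_ge (i : ℕ) j with hlt | hge
        · obtain ⟨m1, m2⟩ := hmono i ⟨j, hjs⟩ hlt
          dsimp only
          split_ifs <;> omega
        · obtain ⟨m1, m2⟩ := hmono ⟨j, hjs⟩ i (show j < (i : ℕ) by omega)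
          dsimp only
          split_ifs <;> omega
    · -- pass 2 : token 2*s-1-j
      have hr : 2 * s - 1 - j < s := by omega
      refine ⟨⟨2 * s - 1 - j, hr⟩, ?_, Or.inl ⟨?_, ?_, ?_⟩⟩
      · intro i hi
        have hv : (i : ℕ) ≠ 2 * s - 1 - j := fun h => hi (Fin.ext h)
        have hil := i.isLt
        dsimp only
        split_ifs <;> first | rfl | omega
      · dsimp only; split_ifs <;> first | exact haq _ | exact hbq _
      · dsimp only; split_ifs <;> first | exact haq _ | exact hbq _
      · intro i hi
        have hv : (i : ℕ) ≠ 2 * s - 1 - j := fun h => hi (Fin.ext h)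
        have hil := i.isLt
        rcases Nat.lt_or_ge (i : ℕ) (2 * s - 1 - j) with hlt | hge
        · obtain ⟨m1, m2⟩ := hmono i ⟨2 * s - 1 - j, hr⟩ hlt
          dsimp only
          split_ifs <;> omega
        · obtain ⟨m1, m2⟩ := hmono ⟨2 * s - 1 - j, hr⟩ i (show 2 * s - 1 - j < (i : ℕ) by omega)
          dsimp only
          split_ifs <;> omega


/-- The "home block" of cells: the `s` smallest cells avoiding `ρ`. -/
def Lc (ρ : ℕ) {s : ℕ} (i : Fin s) : ℕ := if (i : ℕ) < ρ then (i : ℕ) else (i : ℕ) + 1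

/-- Right-side parking cells (top cells of `(t+1, q]` avoiding `ρ`). -/
def Pk (q ρ : ℕ) {s : ℕ} (i : Fin s) : ℕ :=
  if q - s + (i : ℕ) < ρ then q - s + (i : ℕ) else q - s + 1 + (i : ℕ)

lemma Lc_lt (i : Fin s) : Lc ρ i ≤ s ∧ Lc ρ i ≠ ρ := by
  have := i.isLt; unfold Lc; split_ifs <;> omega

lemma Lc_mono : ∀ x y : Fin s, (x : ℕ) < (y : ℕ) → Lc ρ x < Lc ρ y := by
  intro x y h; unfold Lc; split_ifs <;> omega

lemma Lc_strictMono : StrictMono (Lc ρ (s := s)) :=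
  fun x y h => Lc_mono x y (Fin.lt_def.1 h)

/-- Swapping the tokens in block slots `j` and `j+1`. -/
lemma transposition (hst : s < t) (hq : t + s + 1 ≤ q)
    (hρ1 : ρ ≠ t - 1) (hρ2 : ρ ≠ t) (hρ3 : ρ ≠ t + 1)
    (j : ℕ) (hj : j + 1 < s) :
    AChain q t ρ (4 * s + 7) (Lc ρ)
      (Lc ρ ∘ Equiv.swap (⟨j, by omega⟩ : Fin s) ⟨j + 1, hj⟩) := by
  classical
  have ht3 : 3 ≤ t := by omega
  have hL : ∀ i : Fin s, Lc ρ i ≤ s ∧ Lc ρ i ≠ ρ := fun i => Lc_lt i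
  have hLm : ∀ x y : Fin s, (x : ℕ) < (y : ℕ) → Lc ρ x < Lc ρ y := Lc_mono
  have hP : ∀ i : Fin s, q - s + (i : ℕ) ≤ Pk q ρ i ∧ Pk q ρ i ≤ q - s + 1 + (i : ℕ)
      ∧ Pk q ρ i ≠ ρ := by
    intro i; have := i.isLt; unfold Pk; split_ifs <;> omega
  have hPm : ∀ x y : Fin s, (x : ℕ) < (y : ℕ) → Pk q ρ x < Pk q ρ y := by
    intro x y h; unfold Pk; split_ifs <;> omega
  set jF : Fin s := ⟨j, by omega⟩ with hjF
  set j1F : Fin s := ⟨j + 1, hj⟩ with hj1F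
  -- the mid-block configuration with high tokens parked on the right
  set b1 : Fin s → ℕ := fun i => if (i : ℕ) ≤ j + 1 then Lc ρ i else Pk q ρ i with hb1
  have hb1m : ∀ x y : Fin s, (x : ℕ) < (y : ℕ) → b1 x < b1 y := by
    intro x y h
    have hx := x.isLt; have hy := y.isLt
    have l1 := hL x; have l2 := hL y
    have p1 := hP x; have p2 := hP y
    have hLxy := hLm x y h
    have hPxy := hPm x y h
    simp only [hb1]; split_ifs <;> omega
  have hb1sm : StrictMono b1 := fun x y h => hb1m x y (Fin.lt_def.1 h)
  have hb1q : ∀ i, b1 i ≤ q := by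
    intro i; have := i.isLt; have := hL i; have := hP i
    simp only [hb1]; split_ifs <;> omega
  have hLq : ∀ i, Lc ρ (s := s) i ≤ q := fun i => by have := hL i; omega
  -- values of b1 at low indices
  have hb1low : ∀ i : Fin s, (i : ℕ) ≤ j + 1 → b1 i = Lc ρ i := by
    intro i hi; simp only [hb1]; rw [if_pos hi]
  have hb1high : ∀ i : Fin s, j + 1 < (i : ℕ) → b1 i = Pk q ρ i := by
    intro i hi; simp only [hb1]; rw [if_neg (by omega)]
  have hPhigh : ∀ i : Fin s, j + 1 < (i : ℕ) → t + 2 ≤ Pk q ρ i := by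
    intro i hi; have := hP i; omega
  -- intermediate states
  set st : ℕ → ℕ → Fin s → ℕ := fun cj cj1 i =>
    if (i : ℕ) = j then cj else if (i : ℕ) = j + 1 then cj1 else b1 i with hst'
  have hstj : ∀ cj cj1, st cj cj1 jF = cj := by
    intro cj cj1; simp only [hst', hjF]; simp
  have hstj1 : ∀ cj cj1, st cj cj1 j1F = cj1 := by
    intro cj cj1; simp only [hst', hj1F]; simp
  have hstoth : ∀ cj cj1 (i : Fin s), (i : ℕ) ≠ j → (i : ℕ) ≠ j + 1 →
      st cj cj1 i = b1 i := by
    intro cj cj1 i h1 h2; simp only [hst']; rw [if_neg h1, if_neg h2]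
  -- generic blocked-cells analysis for non-moving tokens
  have hval : ∀ cj cj1 (i : Fin s), (i : ℕ) ≠ j → (i : ℕ) ≠ j + 1 →
      ((i : ℕ) < j ∧ st cj cj1 i = Lc ρ i ∧ Lc ρ i < Lc ρ jF) ∨
      (j + 1 < (i : ℕ) ∧ st cj cj1 i = Pk q ρ i ∧ t + 2 ≤ Pk q ρ i) := by
    intro cj cj1 i h1 h2
    have hi := i.isLt
    rcases Nat.lt_or_ge (i : ℕ) j with hlt | hge
    · exact Or.inl ⟨hlt, by rw [hstoth _ _ _ h1 h2, hb1low i (by omega)],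
        hLm i jF (by simp [hjF]; omega)⟩
    · have hgt : j + 1 < (i : ℕ) := by omega
      exact Or.inr ⟨hgt, by rw [hstoth _ _ _ h1 h2, hb1high i hgt], hPhigh i hgt⟩
  -- useful values
  have hLjj1 : Lc ρ jF < Lc ρ j1F := hLm jF j1F (by simp [hjF, hj1F])
  have hLj1t : Lc ρ j1F ≤ s := (hL j1F).1
  have hLjρ : Lc ρ jF ≠ ρ := (hL jF).2
  have hLj1ρ : Lc ρ j1F ≠ ρ := (hL j1F).2
  -- single moves
  have move : ∀ (r : Fin s) (A B : Fin s → ℕ), (∀ i, i ≠ r → B i = A i) →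
      (A r ≤ q ∧ B r ≤ q ∧ ∀ i, i ≠ r → A i < min (A r) (B r) ∨ max (A r) (B r) < A i) →
      AChain q t ρ 1 A B := fun r A B h1 h2 => achain_single ⟨r, h1, Or.inl h2⟩
  have movesp : ∀ (r : Fin s) (A B : Fin s → ℕ), (∀ i, i ≠ r → B i = A i) →
      ((A r = t ∧ B r = ρ) ∨ (A r = ρ ∧ B r = t)) →
      (∀ i, i ≠ r → A i ≠ t ∧ A i ≠ ρ) → AChain q t ρ 1 A B := by
    intro r A B h1 h2 h3
    rcases h2 with ⟨e1, e2⟩ | ⟨e1, e2⟩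
    · exact achain_single ⟨r, h1, Or.inr (Or.inl ⟨e1, e2, h3⟩)⟩
    · exact achain_single ⟨r, h1, Or.inr (Or.inr ⟨e1, e2, h3⟩)⟩
  have hne_j1F : ∀ i : Fin s, i ≠ j1F → (i : ℕ) ≠ j + 1 :=
    fun i hi h => hi (Fin.ext (by simp [hj1F, h]))
  have hne_jF : ∀ i : Fin s, i ≠ jF → (i : ℕ) ≠ j :=
    fun i hi h => hi (Fin.ext (by simp [hjF, h]))
  -- m12 : token j+1 : Lc j1F → t+1
  have m12 : AChain q t ρ 1 (st (Lc ρ jF) (Lc ρ j1F)) (st (Lc ρ jF) (t + 1)) := by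
    refine move j1F _ _ ?_ ?_
    · intro i hi
      by_cases h1 : (i : ℕ) = j
      · have : i = jF := Fin.ext (by simp [hjF, h1])
        rw [this, hstj, hstj]
      · rw [hstoth _ _ _ h1 (hne_j1F i hi), hstoth _ _ _ h1 (hne_j1F i hi)]
    · rw [hstj1, hstj1]
      refine ⟨by omega, by omega, ?_⟩
      intro i hi
      by_cases h1 : (i : ℕ) = j
      · have : i = jF := Fin.ext (by simp [hjF, h1])
        rw [this, hstj]; omega
      · rcases hval _ _ i h1 (hne_j1F i hi) with ⟨_, e, hlt⟩ | ⟨_, e, hge⟩ <;>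
          rw [e] <;> omega
  -- m23 : token j : Lc jF → t
  have m23 : AChain q t ρ 1 (st (Lc ρ jF) (t + 1)) (st t (t + 1)) := by
    refine move jF _ _ ?_ ?_
    · intro i hi
      by_cases h2 : (i : ℕ) = j + 1
      · have : i = j1F := Fin.ext (by simp [hj1F, h2])
        rw [this, hstj1, hstj1]
      · rw [hstoth _ _ _ (hne_jF i hi) h2, hstoth _ _ _ (hne_jF i hi) h2]
    · rw [hstj, hstj]
      refine ⟨by omega, by omega, ?_⟩
      intro i hi
      by_cases h2 : (i : ℕ) = j + 1
      · have : i = j1F := Fin.ext (by simp [hj1F, h2])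
        rw [this, hstj1]; omega
      · rcases hval _ _ i (hne_jF i hi) h2 with ⟨_, e, hlt⟩ | ⟨_, e, hge⟩ <;>
          rw [e] <;> omega
  -- m34 : token j : t → ρ  (step onto the spare cell)
  have m34 : AChain q t ρ 1 (st t (t + 1)) (st ρ (t + 1)) := by
    refine movesp jF _ _ ?_ (Or.inl ⟨hstj _ _, hstj _ _⟩) ?_
    · intro i hi
      by_cases h2 : (i : ℕ) = j + 1
      · have : i = j1F := Fin.ext (by simp [hj1F, h2])
        rw [this, hstj1, hstj1]
      · rw [hstoth _ _ _ (hne_jF i hi) h2, hstoth _ _ _ (hne_jF i hi) h2]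
    · intro i hi
      by_cases h2 : (i : ℕ) = j + 1
      · have : i = j1F := Fin.ext (by simp [hj1F, h2])
        rw [this, hstj1]; omega
      · rcases hval _ _ i (hne_jF i hi) h2 with ⟨_, e, hlt⟩ | ⟨_, e, hge⟩ <;> rw [e]
        · exact ⟨by omega, (hL i).2⟩
        · exact ⟨by omega, (hP i).2.2⟩
  -- m45 : token j+1 : t+1 → t-1  (passing the junction while j waits on ρ)
  have m45 : AChain q t ρ 1 (st ρ (t + 1)) (st ρ (t - 1)) := by
    refine move j1F _ _ ?_ ?_
    · intro i hi
      by_cases h1 : (i : ℕ) = j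
      · have : i = jF := Fin.ext (by simp [hjF, h1])
        rw [this, hstj, hstj]
      · rw [hstoth _ _ _ h1 (hne_j1F i hi), hstoth _ _ _ h1 (hne_j1F i hi)]
    · rw [hstj1, hstj1]
      refine ⟨by omega, by omega, ?_⟩
      intro i hi
      by_cases h1 : (i : ℕ) = j
      · have : i = jF := Fin.ext (by simp [hjF, h1])
        rw [this, hstj]; omega
      · rcases hval _ _ i h1 (hne_j1F i hi) with ⟨_, e, hlt⟩ | ⟨_, e, hge⟩ <;>
          rw [e] <;> omega
  -- m56 : token j : ρ → t
  have m56 : AChain q t ρ 1 (st ρ (t - 1)) (st t (t - 1)) := by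
    refine movesp jF _ _ ?_ (Or.inr ⟨hstj _ _, hstj _ _⟩) ?_
    · intro i hi
      by_cases h2 : (i : ℕ) = j + 1
      · have : i = j1F := Fin.ext (by simp [hj1F, h2])
        rw [this, hstj1, hstj1]
      · rw [hstoth _ _ _ (hne_jF i hi) h2, hstoth _ _ _ (hne_jF i hi) h2]
    · intro i hi
      by_cases h2 : (i : ℕ) = j + 1
      · have : i = j1F := Fin.ext (by simp [hj1F, h2])
        rw [this, hstj1]; omega
      · rcases hval _ _ i (hne_jF i hi) h2 with ⟨_, e, hlt⟩ | ⟨_, e, hge⟩ <;> rw [e]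
        · exact ⟨by omega, (hL i).2⟩
        · exact ⟨by omega, (hP i).2.2⟩
  -- m67 : token j+1 : t-1 → Lc jF
  have m67 : AChain q t ρ 1 (st t (t - 1)) (st t (Lc ρ jF)) := by
    refine move j1F _ _ ?_ ?_
    · intro i hi
      by_cases h1 : (i : ℕ) = j
      · have : i = jF := Fin.ext (by simp [hjF, h1])
        rw [this, hstj, hstj]
      · rw [hstoth _ _ _ h1 (hne_j1F i hi), hstoth _ _ _ h1 (hne_j1F i hi)]
    · rw [hstj1, hstj1]
      refine ⟨by omega, by omega, ?_⟩
      intro i hi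
      by_cases h1 : (i : ℕ) = j
      · have : i = jF := Fin.ext (by simp [hjF, h1])
        rw [this, hstj]; omega
      · rcases hval _ _ i h1 (hne_j1F i hi) with ⟨_, e, hlt⟩ | ⟨_, e, hge⟩ <;>
          rw [e] <;> omega
  -- m78 : token j : t → Lc j1F
  have m78 : AChain q t ρ 1 (st t (Lc ρ jF)) (st (Lc ρ j1F) (Lc ρ jF)) := by
    refine move jF _ _ ?_ ?_
    · intro i hi
      by_cases h2 : (i : ℕ) = j + 1
      · have : i = j1F := Fin.ext (by simp [hj1F, h2])
        rw [this, hstj1, hstj1]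
      · rw [hstoth _ _ _ (hne_jF i hi) h2, hstoth _ _ _ (hne_jF i hi) h2]
    · rw [hstj, hstj]
      refine ⟨by omega, by omega, ?_⟩
      intro i hi
      by_cases h2 : (i : ℕ) = j + 1
      · have : i = j1F := Fin.ext (by simp [hj1F, h2])
        rw [this, hstj1]; omega
      · rcases hval _ _ i (hne_jF i hi) h2 with ⟨_, e, hlt⟩ | ⟨_, e, hge⟩ <;>
          rw [e] <;> omega
  -- endpoints
  have hb1eq : b1 = st (Lc ρ jF) (Lc ρ j1F) := by
    funext i
    by_cases h1 : (i : ℕ) = j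
    · have hij : i = jF := Fin.ext (by simp [hjF, h1])
      rw [hij, hstj, hb1low jF (by simp [hjF])]
    · by_cases h2 : (i : ℕ) = j + 1
      · have hij : i = j1F := Fin.ext (by simp [hj1F, h2])
        rw [hij, hstj1, hb1low j1F (by simp [hj1F])]
      · rw [hstoth _ _ _ h1 h2]
  have hswap : st (Lc ρ j1F) (Lc ρ jF) = b1 ∘ (Equiv.swap jF j1F) := by
    funext i
    by_cases h1 : (i : ℕ) = j
    · have hij : i = jF := Fin.ext (by simp [hjF, h1])
      rw [hij, hstj]
      simp only [Function.comp_apply, Equiv.swap_apply_left]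
      rw [hb1low j1F (by simp [hj1F])]
    · by_cases h2 : (i : ℕ) = j + 1
      · have hij : i = j1F := Fin.ext (by simp [hj1F, h2])
        rw [hij, hstj1]
        simp only [Function.comp_apply, Equiv.swap_apply_right]
        rw [hb1low jF (by simp [hjF])]
      · have hi1 : i ≠ jF := fun h => h1 (by rw [h])
        have hi2 : i ≠ j1F := fun h => h2 (by rw [h])
        rw [hstoth _ _ _ h1 h2]
        simp only [Function.comp_apply, Equiv.swap_apply_of_ne_of_ne hi1 hi2]
  -- assemble
  have chainA : AChain q t ρ (2 * s) (Lc ρ) (st (Lc ρ jF) (Lc ρ j1F)) := by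
    rw [← hb1eq]; exact lemA Lc_strictMono hb1sm hLq hb1q
  have chainB : AChain q t ρ (2 * s) (st (Lc ρ j1F) (Lc ρ jF))
      (Lc ρ ∘ (Equiv.swap jF j1F)) := by
    rw [hswap]
    exact achain_reindex (Equiv.swap jF j1F) (lemA hb1sm Lc_strictMono hb1q hLq)
  have total := achain_trans chainA (achain_trans m12 (achain_trans m23
    (achain_trans m34 (achain_trans m45 (achain_trans m56 (achain_trans m67
    (achain_trans m78 chainB)))))))
  have e : 2 * s + (1 + (1 + (1 + (1 + (1 + (1 + (1 + 2 * s))))))) = 4 * s + 7 := by ring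
  rw [e] at total
  exact total


/-- Mismatched slots of a permutation. -/
def Dset {s : ℕ} (π : Equiv.Perm (Fin s)) : Finset (Fin s) :=
  Finset.univ.filter (fun x => π x ≠ x)

noncomputable def mu {s : ℕ} (π : Equiv.Perm (Fin s)) : ℕ :=
  if h : (Dset π).Nonempty then
    s * (((Dset π).max' h : Fin s) : ℕ) +
      ((((Dset π).max' h : Fin s) : ℕ) - ((π ((Dset π).max' h) : Fin s) : ℕ))
  else 0

lemma Dset_max'_lt {π : Equiv.Perm (Fin s)} (h : (Dset π).Nonempty) :
    ((π ((Dset π).max' h) : Fin s) : ℕ) < (((Dset π).max' h : Fin s) : ℕ) := by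
  set M := (Dset π).max' h with hM
  have hMmem : M ∈ Dset π := (Dset π).max'_mem h
  have hMne : π M ≠ M := by simpa [Dset] using hMmem
  rcases Nat.lt_trichotomy ((π M : Fin s) : ℕ) ((M : Fin s) : ℕ) with hlt | heq | hgt
  · exact hlt
  · exact absurd (Fin.ext heq) hMne
  · exfalso
    have h1 : π (π M) ≠ π M := fun hc => hMne (π.injective hc)
    have h2 : π M ∈ Dset π := by simp [Dset, h1]
    have := (Dset π).le_max' _ h2
    rw [← hM] at this
    exact absurd (Fin.lt_def.2 hgt) (not_lt.2 this)

lemma mu_pos {π : Equiv.Perm (Fin s)} (h : (Dset π).Nonempty) : 1 ≤ mu π := by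
  have := Dset_max'_lt h
  rw [mu, dif_pos h]
  omega

lemma Dset_empty_id {π : Equiv.Perm (Fin s)} (h : ¬ (Dset π).Nonempty) :
    ∀ x, π x = x := by
  intro x
  by_contra hc
  exact h ⟨x, by simp [Dset, hc]⟩

lemma sort_aux (hst : s < t) (hq : t + s + 1 ≤ q)
    (hρ1 : ρ ≠ t - 1) (hρ2 : ρ ≠ t) (hρ3 : ρ ≠ t + 1) :
    ∀ n : ℕ, ∀ π : Equiv.Perm (Fin s), mu π ≤ n →
      ∃ m ≤ n * (4 * s + 7), AChain q t ρ m (Lc ρ ∘ π) (Lc ρ) := by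
  intro n
  induction n with
  | zero =>
    intro π hμ
    by_cases h : (Dset π).Nonempty
    · exact absurd hμ (by have := mu_pos (π := π) h; omega)
    · have : Lc ρ ∘ π = Lc ρ (s := s) := funext fun x => by rw [Function.comp_apply, Dset_empty_id h]
      rw [this]
      exact ⟨0, Nat.zero_le _, achain_zero _⟩
  | succ n ih =>
    intro π hμ
    by_cases h : (Dset π).Nonempty
    · set M := (Dset π).max' h with hM
      have hMmem : M ∈ Dset π := (Dset π).max'_mem h
      have hMne : π M ≠ M := by simpa [Dset] using hMmem
      have hMmax : ∀ x : Fin s, π x ≠ x → x ≤ M :=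
        fun x hx => (Dset π).le_max' x (by simp [Dset, hx])
      have hjM := Dset_max'_lt h
      rw [← hM] at hjM
      set j : ℕ := ((π M : Fin s) : ℕ) with hj
      have hMs := M.isLt
      have hjlt : j + 1 < s ∨ j + 1 = (M : ℕ) ∧ j + 1 < s := by omega
      have hj1s : j + 1 < s := by omega
      have hjs : j < s := by omega
      set jF : Fin s := ⟨j, hjs⟩ with hjF
      set j1F : Fin s := ⟨j + 1, hj1s⟩ with hj1F
      have hπM : π M = jF := Fin.ext (by simp [hjF, hj])
      set π' : Equiv.Perm (Fin s) := π.trans (Equiv.swap jF j1F) with hπ'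
      have hπ'app : ∀ x, π' x = Equiv.swap jF j1F (π x) := fun x => rfl
      have hcomp : (Lc ρ ∘ Equiv.swap jF j1F) ∘ π = Lc ρ ∘ π' := by
        funext x; simp [hπ'app]
      -- the chain of one transposition
      have hT := achain_reindex π (transposition hst hq hρ1 hρ2 hρ3 j hj1s)
      rw [show ((⟨j, by omega⟩ : Fin s) = jF) from rfl] at hT
      rw [hcomp] at hT
      -- measure decreases
      have hπ'M : π' M = j1F := by rw [hπ'app, hπM, Equiv.swap_apply_left]
      have hfix' : ∀ x : Fin s, (M : ℕ) < (x : ℕ) → π' x = x := by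
        intro x hx
        have hπx : π x = x := by
          by_contra hc
          exact absurd (Fin.lt_def.2 hx) (not_lt.2 (hMmax x hc))
        rw [hπ'app, hπx]
        exact Equiv.swap_apply_of_ne_of_ne
          (fun hc => by rw [hc] at hx; simp [hjF] at hx; omega)
          (fun hc => by rw [hc] at hx; simp [hj1F] at hx; omega)
      have hD'le : ∀ x : Fin s, π' x ≠ x → (x : ℕ) ≤ (M : ℕ) := by
        intro x hx
        by_contra hc
        exact hx (hfix' x (by omega))
      have hmu' : mu π' ≤ n := by
        by_cases h' : (Dset π').Nonempty
        · set M' := (Dset π').max' h' with hM'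
          have hM'mem : M' ∈ Dset π' := (Dset π').max'_mem h'
          have hM'ne : π' M' ≠ M' := by simpa [Dset] using hM'mem
          have hM'le : (M' : ℕ) ≤ (M : ℕ) := hD'le M' hM'ne
          have hj'M' := Dset_max'_lt h'
          rw [← hM'] at hj'M'
          have hμval : mu π = s * (M : ℕ) + ((M : ℕ) - j) := by
            rw [mu, dif_pos h, ← hM, ← hj]
          have hμ'val : mu π' = s * (M' : ℕ) + ((M' : ℕ) - ((π' M' : Fin s) : ℕ)) := by
            rw [mu, dif_pos h', ← hM']
          rcases Nat.lt_or_ge (j + 1) (M : ℕ) with hcase | hcase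
          · -- M is still the max mismatched slot
            have hMD' : M ∈ Dset π' := by
              simp only [Dset, Finset.mem_filter, Finset.mem_univ, true_and]
              rw [hπ'M]
              intro hc
              have := congrArg (fun z : Fin s => (z : ℕ)) hc
              simp [hj1F] at this
              omega
            have hMM' : M' = M :=
              le_antisymm (Finset.max'_le _ h' M (fun x hx => Fin.le_def.2 (hD'le x (by simpa [Dset] using hx)))) ((Dset π').le_max' M hMD')
            rw [hμ'val, hMM', hπ'M]
            have : ((j1F : Fin s) : ℕ) = j + 1 := by simp [hj1F]
            rw [this]
            omega
          · -- slot M got fixed, the max drops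
            have hMfix : π' M = M := by
              rw [hπ'M]; exact Fin.ext (by simp [hj1F]; omega)
            have hM'ltM : (M' : ℕ) < (M : ℕ) := by
              rcases Nat.lt_or_ge (M' : ℕ) (M : ℕ) with h1 | h1
              · exact h1
              · have : M' = M := Fin.ext (by omega)
                rw [this] at hM'ne
                exact absurd hMfix hM'ne
            rw [hμ'val]
            have hbound : s * (M' : ℕ) + ((M' : ℕ) - ((π' M' : Fin s) : ℕ))
                ≤ s * ((M : ℕ) - 1) + ((M : ℕ) - 1) := by
              have : (M' : ℕ) ≤ (M : ℕ) - 1 := by omega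
              have h2 : s * (M' : ℕ) ≤ s * ((M : ℕ) - 1) := Nat.mul_le_mul_left s this
              omega
            have hμval2 : mu π ≤ n + 1 := hμ
            rw [hμval] at hμval2
            -- here M - j = 1
            have : s * ((M : ℕ) - 1) + ((M : ℕ) - 1) ≤ n := by
              have hMs' : (M : ℕ) ≤ s - 1 := by omega
              have h3 : s * ((M : ℕ) - 1) + s = s * (M : ℕ) := by
                conv_rhs => rw [show (M : ℕ) = ((M : ℕ) - 1) + 1 by omega]
                rw [Nat.mul_succ]
              omega
            omega
        · rw [mu, dif_neg h']; omega
      obtain ⟨m', hm', hchain'⟩ := ih π' hmu'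
      refine ⟨(4 * s + 7) + m', by rw [show (n+1)*(4*s+7) = n*(4*s+7) + (4*s+7) by ring]; omega, achain_trans hT hchain'⟩
    · have : Lc ρ ∘ π = Lc ρ (s := s) := funext fun x => by rw [Function.comp_apply, Dset_empty_id h]
      rw [this]
      exact ⟨0, Nat.zero_le _, achain_zero _⟩


lemma mu_le (π : Equiv.Perm (Fin s)) : mu π ≤ s * s := by
  by_cases h : (Dset π).Nonempty
  · rw [mu, dif_pos h]
    have h1 := ((Dset π).max' h).isLt
    have h2 : s * (((Dset π).max' h : Fin s) : ℕ) + s ≤ s * s := by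
      calc s * (((Dset π).max' h : Fin s) : ℕ) + s
          = s * ((((Dset π).max' h : Fin s) : ℕ) + 1) := (Nat.mul_succ _ _).symm
        _ ≤ s * s := Nat.mul_le_mul_left s (by omega)
    omega
  · rw [mu, dif_neg h]; omega

/-- The main abstract reconfiguration result : any injective placement of the
tokens on `[0,q]` can be moved to any other one. -/
lemma abs_main (hst : s < t) (hq : t + s + 1 ≤ q)
    (hρ1 : ρ ≠ t - 1) (hρ2 : ρ ≠ t) (hρ3 : ρ ≠ t + 1)
    (a b : Fin s → ℕ) (hainj : Function.Injective a) (hbinj : Function.Injective b)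
    (haq : ∀ i, a i ≤ q) (hbq : ∀ i, b i ≤ q) :
    ∃ m ≤ 4 * s + 2 * (s * s * (4 * s + 7)), AChain q t ρ m a b := by
  classical
  have hLq : ∀ i : Fin s, Lc ρ i ≤ q := fun i => by have := Lc_lt (ρ := ρ) i; omega
  -- sort the start and target placements
  set e₁ : Equiv.Perm (Fin s) := Tuple.sort a with he₁
  set e₂ : Equiv.Perm (Fin s) := Tuple.sort b with he₂
  have hsm₁ : StrictMono (a ∘ e₁) :=
    (Tuple.monotone_sort a).strictMono_of_injective (hainj.comp e₁.injective)
  have hsm₂ : StrictMono (b ∘ e₂) :=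
    (Tuple.monotone_sort b).strictMono_of_injective (hbinj.comp e₂.injective)
  -- phase 1 : compress into the home block
  have c1 : AChain q t ρ (2 * s) (a ∘ e₁) (Lc ρ) :=
    lemA hsm₁ Lc_strictMono (fun i => haq _) hLq
  have c1' : AChain q t ρ (2 * s) a (Lc ρ ∘ e₁.symm) := by
    have h := achain_reindex e₁.symm c1
    have e : (a ∘ e₁) ∘ e₁.symm = a := by funext x; simp
    rwa [e] at h
  -- phase 2 : sort within the block
  obtain ⟨m₂, hm₂, c2⟩ := sort_aux hst hq hρ1 hρ2 hρ3 (s * s) e₁.symm (mu_le _)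
  obtain ⟨m₃, hm₃, c3⟩ := sort_aux hst hq hρ1 hρ2 hρ3 (s * s) e₂.symm (mu_le _)
  have c3' : AChain q t ρ m₃ (Lc ρ) (Lc ρ ∘ e₂.symm) := achain_symm c3
  -- phase 3 : deploy to the targets
  have c4 : AChain q t ρ (2 * s) (Lc ρ) (b ∘ e₂) :=
    lemA Lc_strictMono hsm₂ hLq (fun i => hbq _)
  have c4' : AChain q t ρ (2 * s) (Lc ρ ∘ e₂.symm) b := by
    have h := achain_reindex e₂.symm c4
    have e : (b ∘ e₂) ∘ e₂.symm = b := by funext x; simp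
    rwa [e] at h
  refine ⟨2 * s + (m₂ + (m₃ + 2 * s)), by omega,
    achain_trans c1' (achain_trans c2 (achain_trans c3' c4'))⟩

end HavenAbs


namespace HavenGraph

lemma support_getD_length {V : Type} {G : SimpleGraph V} (d : V) :
    ∀ {x y : V} (W : G.Walk x y), W.support.getD W.length d = y := by
  intro x y W
  induction W with
  | nil => rfl
  | @cons a b c h W ih =>
    rw [Walk.support_cons, Walk.length_cons]
    have h1 : (a :: W.support).getD (W.length + 1) d = W.support.getD W.length d := rfl
    rw [h1, ih]

lemma support_consec_edges {V : Type} {G : SimpleGraph V} (d : V) :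
    ∀ {x y : V} (W : G.Walk x y) (n : ℕ), n + 1 ≤ W.length →
      s(W.support.getD n d, W.support.getD (n + 1) d) ∈ W.edges := by
  intro x y W
  induction W with
  | nil => intro n hn; simp [Walk.length_nil] at hn
  | @cons a b c h W ih =>
    intro n hn
    match n with
    | 0 =>
      rw [Walk.support_cons]
      have h1 : (a :: W.support).getD 0 d = a := rfl
      have h2 : (a :: W.support).getD 1 d = W.support.getD 0 d := rfl
      rw [h1, h2]
      rw [Walk.support_eq_cons W]
      simp [Walk.edges_cons]
    | Nat.succ m =>
      rw [Walk.support_cons]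
      have h1 : (a :: W.support).getD (m + 1) d = W.support.getD m d := rfl
      have h2 : (a :: W.support).getD (m + 2) d = W.support.getD (m + 1) d := rfl
      rw [h1, h2, Walk.edges_cons]
      refine List.mem_cons_of_mem _ (ih m ?_)
      rw [Walk.length_cons] at hn
      omega

/-- A walk along consecutive cells. -/
def seg {V : Type} (H : SimpleGraph V) (v : ℕ → V) (x : ℕ) :
    (d : ℕ) → (∀ n, x ≤ n → n < x + d → H.Adj (v n) (v (n + 1))) → H.Walk (v x) (v (x + d))
  | 0, _ => Walk.nil
  | d + 1, h =>
    (seg H v x d (fun n h1 h2 => h n h1 (by omega))).concat (h (x + d) (by omega) (by omega))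

lemma seg_support {V : Type} (H : SimpleGraph V) (v : ℕ → V) (x : ℕ) :
    ∀ (d : ℕ) (h : ∀ n, x ≤ n → n < x + d → H.Adj (v n) (v (n + 1))),
      (seg H v x d h).support = (List.range (d + 1)).map (fun j => v (x + j)) := by
  intro d
  induction d with
  | zero => intro h; simp [seg, List.range_succ]
  | succ d ih =>
    intro h
    rw [seg, Walk.support_concat, ih,
      show List.range (d + 1 + 1) = List.range (d + 1) ++ [d + 1] from List.range_succ]
    simp [List.concat_eq_append]

lemma seg_exists {V : Type} (H : SimpleGraph V) (v : ℕ → V) (q : ℕ)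
    (hadj : ∀ n, n < q → H.Adj (v n) (v (n + 1)))
    (hinj : ∀ m n, m ≤ q → n ≤ q → v m = v n → m = n)
    (x y : ℕ) (hx : x ≤ q) (hy : y ≤ q) :
    ∃ wk : H.Walk (v x) (v y), wk.IsPath ∧
      (∀ z ∈ wk.support, ∃ n, ((x ≤ n ∧ n ≤ y) ∨ (y ≤ n ∧ n ≤ x)) ∧ z = v n) := by
  have core : ∀ (x' y' : ℕ), x' ≤ y' → y' ≤ q →
      ∃ wk : H.Walk (v x') (v y'), wk.IsPath ∧
        (∀ z ∈ wk.support, ∃ n, x' ≤ n ∧ n ≤ y' ∧ z = v n) := by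
    intro x' y' hxy hyq
    obtain ⟨d, rfl⟩ := Nat.exists_eq_add_of_le hxy
    have hadj' : ∀ n, x' ≤ n → n < x' + d → H.Adj (v n) (v (n + 1)) :=
      fun n h1 h2 => hadj n (by omega)
    refine ⟨seg H v x' d hadj', ?_, ?_⟩
    · rw [Walk.isPath_def, seg_support]
      refine List.Nodup.map_on ?_ List.nodup_range
      intro m hm n hn hvmn
      rw [List.mem_range] at hm hn
      have := hinj (x' + m) (x' + n) (by omega) (by omega) hvmn
      omega
    · intro z hz
      rw [seg_support] at hz
      obtain ⟨j, hj, hjz⟩ := List.mem_map.1 hz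
      rw [List.mem_range] at hj
      exact ⟨x' + j, by omega, by omega, hjz.symm⟩
  rcases le_or_gt x y with hle | hlt
  · obtain ⟨wk, h1, h2⟩ := core x y hle hy
    exact ⟨wk, h1, fun z hz => by
      obtain ⟨n, hn1, hn2, hn3⟩ := h2 z hz
      exact ⟨n, Or.inl ⟨hn1, hn2⟩, hn3⟩⟩
  · obtain ⟨wk, h1, h2⟩ := core y x (by omega) hx
    refine ⟨wk.reverse, h1.reverse, fun z hz => ?_⟩
    rw [Walk.support_reverse, List.mem_reverse] at hz
    obtain ⟨n, hn1, hn2, hn3⟩ := h2 z hz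
    exact ⟨n, Or.inr ⟨hn1, hn2⟩, hn3⟩

end HavenGraph



/-- The set of edges of a walk. -/
def walkEdgeSet {V : Type} {G : SimpleGraph V} {a b : V} (p : G.Walk a b) : Set (Sym2 V) :=
  {e | e ∈ p.edges}

/-- `Ĥ_w`: the union of the haven path `p` with a set `F` of (three) extra edges
incident on the anchor, as a graph on `V`. -/
def Hhat {V : Type} {G : SimpleGraph V} {a b : V} (p : G.Walk a b) (F : Set (Sym2 V)) :
    SimpleGraph V :=
  SimpleGraph.fromEdgeSet (walkEdgeSet p ∪ F)

/-- The vertices of `Ĥ_w`. -/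
def HhatVerts {V : Type} {G : SimpleGraph V} {a b : V} (p : G.Walk a b)
    (F : Set (Sym2 V)) : Set V :=
  {z | z ∈ p.support} ∪ {z | ∃ e ∈ F, z ∈ e}

/-- One sliding move of a robot of `S`: a robot `r ∈ S` slides along a simple path of
the graph `H` from its current vertex to a new vertex, no other robot being located
on any vertex of that path; all other robots stay put. -/
def MoveStep {V : Type} (H : SimpleGraph V) {k : ℕ} (f g : Fin k → V)
    (S : Set (Fin k)) : Prop :=
  ∃ r ∈ S, (∀ i, i ≠ r → g i = f i) ∧
    ∃ wk : H.Walk (f r) (g r), wk.IsPath ∧ ∀ i, i ≠ r → f i ∉ wk.support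

/-- There is a constant `c > 0` such that: given a CSMP instance with
`k ≥ 1` robots on pairwise distinct vertices, a strong `q`-haven `p` anchored at `w`
with `3(k+1) ≤ q ≤ 24k²`, and three edges `F` of `G` incident on `w`, if every robot
located on `Ĥ_w` in fact lies on the haven path `p`, then the set `S` of these robots
can be brought from its current placement to any other placement `ι'` on the vertices
of the haven by at most `c·k⁶` sliding moves inside `Ĥ_w`, all other robots remaining
stationary. -/
theorem haven_reconfiguration :
    ∃ c : ℕ, 0 < c ∧
      ∀ (V : Type) (_ : Fintype V) (_ : DecidableEq V) (G : SimpleGraph V),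
        G.Connected →
        ∀ (k q : ℕ), 1 ≤ k → 3 * (k + 1) ≤ q → q ≤ 24 * k ^ 2 →
        ∀ (x y w : V) (p : G.Walk x y), StrongHaven G q p w →
        ∀ F : Set (Sym2 V), F ⊆ G.edgeSet → F.ncard = 3 → (∀ e ∈ F, w ∈ e) →
        ∀ pos : Fin k → V, Function.Injective pos →
        (∀ i, pos i ∈ HhatVerts p F → pos i ∈ p.support) →
        ∀ ι' : Fin k → V, Set.InjOn ι' {i | pos i ∈ p.support} →
        (∀ i, pos i ∈ p.support → ι' i ∈ p.support) →
        ∃ m : ℕ, m ≤ c * k ^ 6 ∧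
          ∃ f : ℕ → Fin k → V,
            f 0 = pos ∧
            (∀ j i, pos i ∉ p.support → f j i = pos i) ∧
            (∀ i, pos i ∈ p.support → f m i = ι' i) ∧
            ∀ j < m, MoveStep (Hhat p F) (f j) (f (j + 1)) {i | pos i ∈ p.support} := by

  classical
  refine ⟨100, by norm_num, ?_⟩
  intro V _ _ G _ k q hk hq3 hq24 x y w p hhaven F hFE hF3 hFw pos hposinj hloc ι' hι'inj hι'mem
  obtain ⟨hpath, hplen, hw, hdeg, hta, htb, hda, hdb⟩ := hhaven
  have hnodup : p.support.Nodup := hpath.support_nodup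
  have hlen : p.support.length = q + 1 := by rw [Walk.length_support, hplen]
  set t : ℕ := (p.takeUntil w hw).length with ht
  have hsplit : t + (p.dropUntil w hw).length = q := by
    have h1 := congrArg Walk.length (p.take_spec hw)
    rw [Walk.length_append] at h1
    rw [ht, h1, hplen]
  have htk : k + 1 ≤ t := by omega
  have htq : t + (k + 1) ≤ q := by omega
  -- pick an extra neighbour u of w not adjacent to w along the path
  have hFim : F = (fun z => s(w, z)) '' {z | s(w, z) ∈ F} := by
    ext e; constructor
    · intro he
      obtain ⟨z, hz⟩ := Sym2.mem_iff_exists.1 (hFw e he)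
      exact ⟨z, by rw [Set.mem_setOf_eq, ← hz]; exact he, hz.symm⟩
    · rintro ⟨z, hz, rfl⟩; exact hz
  have hcard3 : Set.ncard {z | s(w, z) ∈ F} = 3 := by
    have hinj : Function.Injective (fun z : V => s(w, z)) :=
      fun a b hab => Sym2.congr_right.1 hab
    rw [← Set.ncard_image_of_injective _ hinj, ← hFim, hF3]
  have hpick : ∃ z, s(w, z) ∈ F ∧ z ≠ p.support.getD (t - 1) w ∧
      z ≠ p.support.getD (t + 1) w := by
    by_contra hc
    push_neg at hc
    have hsub : {z | s(w, z) ∈ F} ⊆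
        {p.support.getD (t - 1) w, p.support.getD (t + 1) w} := by
      intro z hz
      by_cases h1 : z = p.support.getD (t - 1) w
      · exact Or.inl h1
      · exact Or.inr (hc z hz h1)
    have hle := Set.ncard_le_ncard hsub (Set.toFinite _)
    have h2 : ({p.support.getD (t - 1) w, p.support.getD (t + 1) w} : Set V).ncard ≤ 2 :=
      le_trans (Set.ncard_insert_le _ _) (by simp)
    omega
  obtain ⟨u, huF, hu1, hu2⟩ := hpick
  have hadjwu : G.Adj w u := (G.mem_edgeSet).1 (hFE huF)
  have hwu : w ≠ u := G.ne_of_adj hadjwu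
  -- the cell coordinates
  set v : ℕ → V := fun n => p.support.getD n u with hv
  set ρ : ℕ := List.idxOf u p.support with hρ
  have hvd : ∀ n, n ≤ q → ∀ d : V, p.support.getD n d = v n := by
    intro n hn d
    show p.support.getD n d = p.support.getD n u
    rw [List.getD_eq_getElem _ _ (show n < p.support.length by omega),
      List.getD_eq_getElem _ _ (show n < p.support.length by omega)]
  have hvmem : ∀ n, n ≤ q → v n ∈ p.support := by
    intro n hn
    show p.support.getD n u ∈ p.support
    rw [List.getD_eq_getElem _ _ (show n < p.support.length by omega)]
    exact List.getElem_mem _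
  have hρq : ρ ≤ q + 1 := by
    rw [hρ]
    have := List.idxOf_le_length (a := u) (l := p.support)
    omega
  have hvρ : v ρ = u := by
    by_cases hu : u ∈ p.support
    · show p.support.getD ρ u = u
      rw [hρ, List.getD_eq_getElem _ _ (List.idxOf_lt_length_iff.2 hu)]
      exact List.getElem_idxOf _
    · show p.support.getD ρ u = u
      apply List.getD_eq_default
      rw [hρ]
      exact le_of_eq (List.idxOf_eq_length_iff.2 hu).symm
  have hinjq : ∀ m n, m ≤ q → n ≤ q → v m = v n → m = n := by
    intro m n hm hn h
    have h' : p.support.getD m u = p.support.getD n u := h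
    rw [List.getD_eq_getElem _ _ (show m < p.support.length by omega),
      List.getD_eq_getElem _ _ (show n < p.support.length by omega)] at h'
    exact (List.Nodup.getElem_inj_iff hnodup).1 h'
  have hvinj : ∀ m n, (m ≤ q ∨ m = ρ) → (n ≤ q ∨ n = ρ) → v m = v n → m = n := by
    intro m n hm hn h
    have key : ∀ z, z = ρ → ¬ z ≤ q → ∀ z', z' ≤ q → v z' ≠ v z := by
      intro z hz hzq z' hz' hne
      have hρbig : ρ = q + 1 := by omega
      have hunotin : u ∉ p.support := by
        apply List.idxOf_eq_length_iff.1
        rw [← hρ, hρbig, hlen]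
      have : v z = u := by rw [hz]; exact hvρ
      rw [this] at hne
      exact hunotin (hne ▸ hvmem z' hz')
    rcases le_or_gt m q with hm1 | hm1
    · rcases le_or_gt n q with hn1 | hn1
      · exact hinjq m n hm1 hn1 h
      · exact absurd h (key n (by omega) (by omega) m hm1)
    · rcases le_or_gt n q with hn1 | hn1
      · exact absurd h.symm (key m (by omega) (by omega) n hn1)
      · omega
  -- the anchor is cell t
  have hvt : v t = w := by
    have h2 : ((p.takeUntil w hw).append (p.dropUntil w hw)).support = p.support := by
      rw [p.take_spec hw]
    rw [Walk.support_append] at h2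
    have h3 : t < (p.takeUntil w hw).support.length := by
      rw [Walk.length_support]; omega
    show p.support.getD t u = w
    rw [← h2, List.getD_append _ _ _ _ h3]
    have h4 := HavenGraph.support_getD_length u (p.takeUntil w hw)
    rw [← ht] at h4
    exact h4
  -- facts about the spare cell ρ
  have htq1 : t + 1 ≤ q := by omega
  have hρ1 : ρ ≠ t - 1 := by
    intro hc
    apply hu1
    rw [hvd (t - 1) (by omega) w, ← hc, hvρ]
  have hρ2 : ρ ≠ t := by
    intro hc
    apply hwu
    rw [← hvt, ← hc, hvρ]
  have hρ3 : ρ ≠ t + 1 := by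
    intro hc
    apply hu2
    rw [hvd (t + 1) (by omega) w, ← hc, hvρ]
  -- adjacency inside Ĥ
  have hadjH : ∀ n, n < q → (Hhat p F).Adj (v n) (v (n + 1)) := by
    intro n hn
    have hmem : s(p.support.getD n u, p.support.getD (n + 1) u) ∈ p.edges :=
      HavenGraph.support_consec_edges u p n (by omega)
    have hmem' : s(v n, v (n + 1)) ∈ p.edges := hmem
    rw [Hhat, SimpleGraph.fromEdgeSet_adj]
    exact ⟨Or.inl hmem', G.ne_of_adj (p.adj_of_mem_edges hmem')⟩
  have hadjHwu : (Hhat p F).Adj w u := by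
    rw [Hhat, SimpleGraph.fromEdgeSet_adj]
    exact ⟨Or.inr huF, hwu⟩
  have hHV : ∀ n, n ≤ q → v n ∈ HhatVerts p F := fun n hn => Or.inl (hvmem n hn)
  have hHVw : w ∈ HhatVerts p F := Or.inl hw
  have hHVu : u ∈ HhatVerts p F := Or.inr ⟨s(w, u), huF, by simp⟩
  -- the robots on the haven path, as abstract tokens
  set St : Finset (Fin k) := Finset.univ.filter (fun i => pos i ∈ p.support) with hSt
  have hStiff : ∀ i : Fin k, i ∈ St ↔ pos i ∈ p.support := by
    intro i; rw [hSt]; simp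
  set s : ℕ := St.card with hs
  have hsk : s ≤ k := by
    rw [hs, hSt]
    exact le_trans (Finset.card_filter_le _ _) (by simp)
  set eqv : {i // i ∈ St} ≃ Fin s := St.equivFin with heqv
  have hmemsup : ∀ τ : Fin s, pos ((eqv.symm τ : {i // i ∈ St}) : Fin k) ∈ p.support :=
    fun τ => (hStiff _).1 (eqv.symm τ).2
  set a : Fin s → ℕ := fun τ => List.idxOf (pos ((eqv.symm τ : {i // i ∈ St}) : Fin k)) p.support with ha
  set b : Fin s → ℕ := fun τ => List.idxOf (ι' ((eqv.symm τ : {i // i ∈ St}) : Fin k)) p.support with hb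
  have haq : ∀ τ, a τ ≤ q := by
    intro τ
    have := List.idxOf_lt_length_iff.2 (hmemsup τ)
    show List.idxOf _ p.support ≤ q
    omega
  have hbq : ∀ τ, b τ ≤ q := by
    intro τ
    have := List.idxOf_lt_length_iff.2 (hι'mem _ (hmemsup τ))
    show List.idxOf _ p.support ≤ q
    omega
  have hgetD_indexOf : ∀ z : V, z ∈ p.support → v (List.idxOf z p.support) = z := by
    intro z hz
    show p.support.getD _ u = z
    rw [List.getD_eq_getElem _ _ (List.idxOf_lt_length_iff.2 hz)]
    exact List.getElem_idxOf _
  have hva : ∀ τ, v (a τ) = pos ((eqv.symm τ : {i // i ∈ St}) : Fin k) :=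
    fun τ => hgetD_indexOf _ (hmemsup τ)
  have hvb : ∀ τ, v (b τ) = ι' ((eqv.symm τ : {i // i ∈ St}) : Fin k) :=
    fun τ => hgetD_indexOf _ (hι'mem _ (hmemsup τ))
  have hainj : Function.Injective a := by
    intro τ₁ τ₂ h
    have h2 : v (a τ₁) = v (a τ₂) := by rw [h]
    rw [hva, hva] at h2
    have h3 := hposinj h2
    have h4 : (eqv.symm τ₁ : {i // i ∈ St}) = eqv.symm τ₂ := Subtype.ext h3
    exact eqv.symm.injective h4
  have hbinj : Function.Injective b := by
    intro τ₁ τ₂ h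
    have h2 : v (b τ₁) = v (b τ₂) := by rw [h]
    rw [hvb, hvb] at h2
    have h3 := hι'inj (hmemsup τ₁) (hmemsup τ₂) h2
    have h4 : (eqv.symm τ₁ : {i // i ∈ St}) = eqv.symm τ₂ := Subtype.ext h3
    exact eqv.symm.injective h4
  -- run the abstract reconfiguration
  have hst' : s < t := by omega
  have hq' : t + s + 1 ≤ q := by omega
  obtain ⟨m, hmle, g, hg0, hgm, hmoves⟩ :=
    HavenAbs.abs_main (q := q) (t := t) (ρ := ρ) hst' hq' hρ1 hρ2 hρ3 a b hainj hbinj haq hbq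
  -- numeric bound
  have hbound : m ≤ 100 * k ^ 6 := by
    have e1 : s * s * (4 * s + 7) ≤ k * k * (4 * k + 7) :=
      Nat.mul_le_mul (Nat.mul_le_mul hsk hsk) (by omega)
    have e2 : k * k * (4 * k + 7) ≤ k * k * (11 * k) :=
      Nat.mul_le_mul_left _ (by omega)
    have e3 : k * k * (11 * k) = 11 * (k * k * k) := by ring
    have e4 : k * k * k ≤ k ^ 6 := by
      calc k * k * k = k ^ 3 := by ring
        _ ≤ k ^ 6 := Nat.pow_le_pow_right hk (by omega)
    have e5 : k ≤ k * k * k := by nlinarith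
    omega
  -- board invariant along the chain
  have hboard : ∀ j, j ≤ m → ∀ τ, g j τ ≤ q ∨ g j τ = ρ := by
    intro j
    induction j with
    | zero => intro _ τ; rw [hg0]; exact Or.inl (haq τ)
    | succ j ih =>
      intro hj τ
      obtain ⟨r, hoth, hc⟩ := hmoves j (by omega)
      by_cases hir : τ = r
      · subst hir
        rcases hc with ⟨_, h2, _⟩ | ⟨_, h2, _⟩ | ⟨_, h2, _⟩
        · exact Or.inl h2
        · exact Or.inr h2
        · exact Or.inl (by omega)
      · rw [hoth τ hir]
        exact ih (by omega) τ
  -- the transferred motion of the robots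
  set f : ℕ → Fin k → V :=
    fun j i => if h : i ∈ St then v (g j (eqv ⟨i, h⟩)) else pos i with hf
  have hfS : ∀ (j : ℕ) (i : Fin k) (h : i ∈ St), f j i = v (g j (eqv ⟨i, h⟩)) := by
    intro j i h
    rw [hf]; exact dif_pos h
  have hfN : ∀ (j : ℕ) (i : Fin k), i ∉ St → f j i = pos i := by
    intro j i h
    rw [hf]; exact dif_neg h
  refine ⟨m, hbound, f, ?_, ?_, ?_, ?_⟩
  · funext i
    by_cases h : i ∈ St
    · rw [hfS 0 i h, hg0, hva]
      rw [eqv.symm_apply_apply]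
    · exact hfN 0 i h
  · intro j i hi
    exact hfN j i (fun h => hi ((hStiff i).1 h))
  · intro i hi
    have h : i ∈ St := (hStiff i).2 hi
    rw [hfS m i h, hgm, hvb]
    rw [eqv.symm_apply_apply]
  · intro j hj
    obtain ⟨r, hoth, hc⟩ := hmoves j hj
    set r' : Fin k := ((eqv.symm r : {i // i ∈ St}) : Fin k) with hr'
    have hr'St : r' ∈ St := (eqv.symm r).2
    have hrback : eqv ⟨r', hr'St⟩ = r := by
      have h1 : (⟨r', hr'St⟩ : {i // i ∈ St}) = eqv.symm r := Subtype.coe_eta _ _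
      rw [h1, eqv.apply_symm_apply]
    have htok : ∀ (i : Fin k) (h : i ∈ St), i ≠ r' → eqv ⟨i, h⟩ ≠ r := by
      intro i h hir hc2
      apply hir
      have h2 : (⟨i, h⟩ : {i // i ∈ St}) = eqv.symm r := by
        rw [← hc2, eqv.symm_apply_apply]
      rw [hr', ← h2]
    have hjm : j ≤ m := le_of_lt hj
    have hfr : ∀ jj, f jj r' = v (g jj r) := by
      intro jj; rw [hfS jj r' hr'St, hrback]
    refine ⟨r', (hStiff r').1 hr'St, ?_, ?_⟩
    · intro i hir
      by_cases h : i ∈ St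
      · rw [hfS (j + 1) i h, hfS j i h, hoth _ (htok i h hir)]
      · rw [hfN _ _ h, hfN _ _ h]
    · rcases hc with ⟨hxq, hyq, hcor⟩ | ⟨hx, hy, hcor⟩ | ⟨hx, hy, hcor⟩
      · -- interval move along the path
        rw [hfr j, hfr (j + 1)]
        obtain ⟨wk, hwkp, hwks⟩ := HavenGraph.seg_exists (Hhat p F) v q hadjH hinjq
          (g j r) (g (j + 1) r) hxq hyq
        refine ⟨wk, hwkp, ?_⟩
        intro i hir hmem
        by_cases h : i ∈ St
        · rw [hfS j i h] at hmem
          obtain ⟨n, hn1, hn2⟩ := hwks _ hmem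
          have hnq : n ≤ q := by omega
          have heq := hvinj _ _ (hboard j hjm (eqv ⟨i, h⟩)) (Or.inl hnq) hn2
          have hcor' := hcor _ (htok i h hir)
          omega
        · rw [hfN j i h] at hmem
          obtain ⟨n, hn1, hn2⟩ := hwks _ hmem
          have hnq : n ≤ q := by omega
          have hin : pos i ∈ HhatVerts p F := by rw [hn2]; exact hHV n hnq
          exact h ((hStiff i).2 (hloc i hin))
      · -- spare move t → ρ
        have e1 : f j r' = w := by rw [hfr j, hx, hvt]
        have e2 : f (j + 1) r' = u := by rw [hfr (j + 1), hy, hvρ]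
        rw [e1, e2]
        refine ⟨Walk.cons hadjHwu Walk.nil, ?_, ?_⟩
        · rw [Walk.isPath_def]
          simp [hwu]
        · intro i hir hmem
          simp only [Walk.support_cons, Walk.support_nil, List.mem_cons,
            List.mem_singleton, List.not_mem_nil, or_false] at hmem
          by_cases h : i ∈ St
          · have hcor' := hcor _ (htok i h hir)
            have hb := hboard j hjm (eqv ⟨i, h⟩)
            rw [hfS j i h] at hmem
            rcases hmem with hm | hm
            · exact hcor'.1 (hvinj _ _ hb (Or.inl (by omega)) (by rw [hm, hvt]))
            · exact hcor'.2 (hvinj _ _ hb (Or.inr rfl) (by rw [hm, hvρ]))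
          · rw [hfN j i h] at hmem
            rcases hmem with hm | hm
            · exact h ((hStiff i).2 (hloc i (by rw [hm]; exact hHVw)))
            · exact h ((hStiff i).2 (hloc i (by rw [hm]; exact hHVu)))
      · -- spare move ρ → t
        have e1 : f j r' = u := by rw [hfr j, hx, hvρ]
        have e2 : f (j + 1) r' = w := by rw [hfr (j + 1), hy, hvt]
        rw [e1, e2]
        refine ⟨Walk.cons hadjHwu.symm Walk.nil, ?_, ?_⟩
        · rw [Walk.isPath_def]
          simp [Ne.symm hwu]
        · intro i hir hmem
          simp only [Walk.support_cons, Walk.support_nil, List.mem_cons,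
            List.mem_singleton, List.not_mem_nil, or_false] at hmem
          by_cases h : i ∈ St
          · have hcor' := hcor _ (htok i h hir)
            have hb := hboard j hjm (eqv ⟨i, h⟩)
            rw [hfS j i h] at hmem
            rcases hmem with hm | hm
            · exact hcor'.2 (hvinj _ _ hb (Or.inr rfl) (by rw [hm, hvρ]))
            · exact hcor'.1 (hvinj _ _ hb (Or.inl (by omega)) (by rw [hm, hvt]))
          · rw [hfN j i h] at hmem
            rcases hmem with hm | hm
            · exact h ((hStiff i).2 (hloc i (by rw [hm]; exact hHVu)))
            · exact h ((hStiff i).2 (hloc i (by rw [hm]; exact hHVw)))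
end

section
/- Let (G, s, t, ℓ, R) be a YES-instance of CSMP-1 with s ≠ t, let S be a solution with the minimum number of moves, and let G_S be the subgraph of G consisting of all edges of the paths traversed during S. Then G_S is connected and contains at most ℓ blocker vertices. -/
open SimpleGraph

/-- A CSMP-1 instance: a graph `G`, the starting vertex `s` and destination `t` of
the main robot, the budget `ℓ`, and the set `blk` of vertices initially occupied by
the blocker robots (the robots other than the main robot). -/
structure OneInst (V : Type) where
  G : SimpleGraph V
  s : V
  t : V
  ell : ℕ
  blk : Set V

variable {V : Type} [DecidableEq V]

/-- A valid instance: the graph is connected and the robots occupy pairwise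
distinct vertices. -/
def OneInst.Valid (I : OneInst V) : Prop := I.G.Connected ∧ I.s ∉ I.blk

/-- One move: either the main robot (currently at `m`, with blockers occupying `o`)
slides along a simple path `l` of `G` (recorded as the list of visited vertices)
from `m` to a different vertex `m'`, no vertex of the path carrying a blocker, or a
blocker slides along such a path, which contains neither the main robot nor any
other blocker. -/
def Step1 {V : Type} (G : SimpleGraph V) (m : V) (o : Set V) (m' : V) (o' : Set V)
    (l : List V) : Prop :=
  l.Chain' G.Adj ∧ l.Nodup ∧ 2 ≤ l.length ∧
    ((l.head? = some m ∧ l.getLast? = some m' ∧ o' = o ∧ ∀ v ∈ l, v ∉ o) ∨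
      (∃ x y, x ∈ o ∧ l.head? = some x ∧ l.getLast? = some y ∧
        o' = insert y (o \ {x}) ∧ m' = m ∧ m ∉ l ∧ ∀ v ∈ l, v ∈ o → v = x))

/-- A schedule for a CSMP-1 instance: a sequence of `q` moves; `main j` is the
position of the main robot and `occ j` the set of positions of the blockers at the
end of time step `j`, and `wlk j` is the path traversed at time step `j + 1`. -/
structure Sched1 {V : Type} (G : SimpleGraph V) (s : V) (blk : Set V) where
  q : ℕ
  main : ℕ → V
  occ : ℕ → Set V
  wlk : ℕ → List V
  main0 : main 0 = s
  occ0 : occ 0 = blk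
  step : ∀ j < q, Step1 G (main j) (occ j) (main (j + 1)) (occ (j + 1)) (wlk j)

/-- A solution: a sequence of at most `ℓ` moves at whose end the main robot
occupies `t`. -/
def Sol1 (I : OneInst V) (S : Sched1 I.G I.s I.blk) : Prop :=
  S.q ≤ I.ell ∧ S.main S.q = I.t

/-- A YES-instance of CSMP-1. -/
def OneInst.Yes (I : OneInst V) : Prop := ∃ S : Sched1 I.G I.s I.blk, Sol1 I S

/-- `G_S`: the subgraph of `G` consisting of all edges of the paths traversed
during the schedule `S`. -/
def GS1 {V : Type} {G : SimpleGraph V} {s : V} {blk : Set V} (S : Sched1 G s blk) :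
    SimpleGraph V :=
  SimpleGraph.fromEdgeSet {e | ∃ j < S.q, e ∈ listEdges (S.wlk j)}

/-- The blocker-distance between `v` and `w`: the minimum number of blocker
vertices on a `v`-`w` path of `G`. -/
noncomputable def blockd {V : Type} (G : SimpleGraph V) (blk : Set V) (v w : V) : ℕ :=
  sInf {m | ∃ z : G.Walk v w, z.IsPath ∧ {x | x ∈ z.support ∧ x ∈ blk}.ncard = m}

/-- The set of free vertices: the vertices initially occupied by no robot. -/
def freeSet (I : OneInst V) : Set V := {v | v ∉ I.blk ∧ v ≠ I.s}

set_option linter.unusedSectionVars false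

lemma zip_of_chain' {R : V → V → Prop} : ∀ (l : List V), l.Chain' R →
    ∀ ab ∈ l.zip l.tail, R ab.1 ab.2
  | [] => by simp
  | [a] => by simp
  | a :: b :: t => by
    intro h ab hab
    simp only [List.Chain', List.isChain_cons_cons] at h
    simp only [List.tail_cons, List.zip_cons_cons, List.mem_cons] at hab
    rcases hab with rfl | hab
    · exact h.1
    · exact zip_of_chain' (b :: t) h.2 ab (by simpa using hab)

lemma chain'_of_zip {R : V → V → Prop} : ∀ (l : List V),
    (∀ ab ∈ l.zip l.tail, R ab.1 ab.2) → l.Chain' R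
  | [] => by simp [List.Chain']
  | [a] => by simp [List.Chain']
  | a :: b :: t => by
    intro h
    simp only [List.Chain', List.isChain_cons_cons]
    refine ⟨h (a, b) (by simp), chain'_of_zip (b :: t) ?_⟩
    intro ab hab
    exact h ab (by simp only [List.tail_cons, List.zip_cons_cons, List.mem_cons]; right; simpa using hab)

lemma chain'_reach {G : SimpleGraph V} : ∀ (l : List V), l.Chain' G.Adj →
    ∀ u ∈ l, ∀ v ∈ l, G.Reachable u v
  | [] => by simp
  | [a] => by
    intro _ u hu v hv
    simp only [List.mem_singleton] at hu hv
    subst hu; subst hv; rfl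
  | a :: b :: t => by
    intro h u hu v hv
    simp only [List.Chain', List.isChain_cons_cons] at h
    have ih := chain'_reach (b :: t) h.2
    have hab : G.Reachable a b := h.1.reachable
    simp only [List.mem_cons] at hu hv
    rcases hu with rfl | hu <;> rcases hv with rfl | hv
    · rfl
    · exact hab.trans (ih b (by simp) v (by simpa using hv))
    · exact ((hab.trans (ih b (by simp) u (by simpa using hu)))).symm
    · exact ih u (by simpa using hu) v (by simpa using hv)

section Sched
variable {G : SimpleGraph V} {s : V} {blk : Set V} (S : Sched1 G s blk)

lemma wlk_chain' {j : ℕ} (hj : j < S.q) : (S.wlk j).Chain' (GS1 S).Adj := by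
  have hc := (S.step j hj).1
  apply chain'_of_zip
  intro ab hab
  rw [GS1, SimpleGraph.fromEdgeSet_adj]
  refine ⟨⟨j, hj, ab, hab, rfl⟩, (zip_of_chain' _ hc ab hab).ne⟩

lemma wlk_reach {j : ℕ} (hj : j < S.q) :
    ∀ u ∈ S.wlk j, ∀ v ∈ S.wlk j, (GS1 S).Reachable u v :=
  chain'_reach _ (wlk_chain' S hj)

lemma main_reach : ∀ j ≤ S.q, (GS1 S).Reachable s (S.main j) := by
  intro j
  induction j with
  | zero => intro _; rw [S.main0]
  | succ j ih =>
    intro hj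
    have hj' : j < S.q := hj
    have ihr := ih hj'.le
    rcases (S.step j hj').2.2.2 with hmain | hblk
    · have h1 : S.main j ∈ S.wlk j := List.mem_of_mem_head? (by rw [hmain.1]; rfl)
      have h2 : S.main (j+1) ∈ S.wlk j :=
        List.mem_of_mem_getLast? (by rw [hmain.2.1]; rfl)
      exact ihr.trans (wlk_reach S hj' _ h1 _ h2)
    · obtain ⟨x, y, _, _, _, _, hm, _⟩ := hblk
      rwa [hm]

lemma leave_occ {v : V} : ∀ {j : ℕ}, j ≤ S.q → v ∈ S.occ 0 → v ∉ S.occ j →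
    ∃ k < j, (S.wlk k).head? = some v := by
  intro j
  induction j with
  | zero => intro _ h0 h; exact absurd h0 h
  | succ j ih =>
    intro hj h0 h
    by_cases hv : v ∈ S.occ j
    · -- leaves at step j
      have hj' : j < S.q := hj
      rcases (S.step j hj').2.2.2 with hmain | hblk
      · exact absurd (hmain.2.2.1 ▸ hv) h
      · obtain ⟨x, y, hx, hhd, _, ho', _, _, _⟩ := hblk
        have hvx : v = x := by
          by_contra hne
          exact h (ho' ▸ Set.mem_insert_iff.mpr (Or.inr ⟨hv, hne⟩))
        exact ⟨j, lt_add_one j, hvx ▸ hhd⟩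
    · obtain ⟨k, hk, hh⟩ := ih (Nat.le_of_succ_le hj) h0 hv
      exact ⟨k, hk.trans (lt_add_one j), hh⟩

lemma mem_walk_of_mem_support {v : V} (hv : v ∈ (GS1 S).support) :
    ∃ j < S.q, v ∈ S.wlk j := by
  rw [SimpleGraph.mem_support] at hv
  obtain ⟨w, hw⟩ := hv
  rw [GS1, SimpleGraph.fromEdgeSet_adj] at hw
  obtain ⟨⟨j, hj, ab, hab, he⟩, _⟩ := hw
  have := List.of_mem_zip hab
  have hv : v = ab.1 ∨ v = ab.2 := by
    have := Sym2.eq_iff.mp he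
    tauto
  rcases hv with rfl | rfl
  · exact ⟨j, hj, this.1⟩
  · exact ⟨j, hj, List.mem_of_mem_tail this.2⟩

lemma blk_head {v : V} (hv : v ∈ blk) {j : ℕ} (hj : j < S.q) (hmem : v ∈ S.wlk j) :
    ∃ k < S.q, (S.wlk k).head? = some v := by
  by_cases hocc : v ∈ S.occ j
  · rcases (S.step j hj).2.2.2 with hmain | hblk
    · exact absurd hocc (hmain.2.2.2 v hmem)
    · obtain ⟨x, y, _, hhd, _, _, _, _, hall⟩ := hblk
      refine ⟨j, hj, ?_⟩
      rw [← hall v hmem hocc] at hhd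
      exact hhd
  · have hv0 : v ∈ S.occ 0 := by rw [S.occ0]; exact hv
    obtain ⟨k, hk, hh⟩ := leave_occ S hj.le hv0 hocc
    exact ⟨k, hk.trans hj, hh⟩

lemma prune : ∀ n ≤ S.q, ∃ S' : Sched1 G s blk,
    (S'.q ≤ n ∧
      ((∃ j < n, ∃ v ∈ S.wlk j, ¬ (GS1 S).Reachable s v) → S'.q < n)) ∧
    S'.main S'.q = S.main n ∧
    S'.occ S'.q = (S.occ n ∩ {v | (GS1 S).Reachable s v})
      ∪ (blk \ {v | (GS1 S).Reachable s v}) := by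
  intro n
  induction n with
  | zero =>
    intro _
    refine ⟨⟨0, fun _ => s, fun _ => blk, fun _ => [], rfl, rfl,
      fun j hj => absurd hj (Nat.not_lt_zero j)⟩,
      ⟨le_rfl, fun ⟨j, hj, _⟩ => absurd hj (Nat.not_lt_zero j)⟩, S.main0.symm, ?_⟩
    rw [S.occ0]
    exact (Set.inter_union_diff blk _).symm
  | succ n ih =>
    intro hn
    have hn' : n < S.q := hn
    obtain ⟨S', ⟨hle, himp⟩, hmainIH, hoccIH⟩ := ih hn'.le
    obtain ⟨hc, hnd, hlen, hor⟩ := S.step n hn'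
    by_cases hkeep : ∀ v ∈ S.wlk n, (GS1 S).Reachable s v
    · -- keep this step
      set Cs : Set V := {v | (GS1 S).Reachable s v} with hCs
      set newOcc : Set V := (S.occ (n+1) ∩ Cs) ∪ (blk \ Cs) with hnewOcc
      refine ⟨⟨S'.q + 1,
        fun j => if j ≤ S'.q then S'.main j else S.main (n+1),
        fun j => if j ≤ S'.q then S'.occ j else newOcc,
        fun j => if j < S'.q then S'.wlk j else S.wlk n,
        by show (if (0:ℕ) ≤ S'.q then S'.main 0 else S.main (n+1)) = s
           rw [if_pos (Nat.zero_le _), S'.main0],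
        by show (if (0:ℕ) ≤ S'.q then S'.occ 0 else newOcc) = blk
           rw [if_pos (Nat.zero_le _), S'.occ0], ?_⟩, ?_, ?_, ?_⟩
      · -- step property
        intro j hj
        show Step1 G (if j ≤ S'.q then S'.main j else S.main (n+1))
          (if j ≤ S'.q then S'.occ j else newOcc)
          (if j + 1 ≤ S'.q then S'.main (j+1) else S.main (n+1))
          (if j + 1 ≤ S'.q then S'.occ (j+1) else newOcc)
          (if j < S'.q then S'.wlk j else S.wlk n)
        rcases lt_or_eq_of_le (Nat.lt_succ_iff.mp hj) with hjq | hjq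
        · simpa [if_pos hjq.le, if_pos (Nat.succ_le_of_lt hjq), if_pos hjq]
            using S'.step j hjq
        · subst hjq
          rw [if_pos le_rfl, if_pos le_rfl, if_neg (show ¬ S'.q + 1 ≤ S'.q by omega),
            if_neg (show ¬ S'.q + 1 ≤ S'.q by omega), if_neg (lt_irrefl _),
            hmainIH, hoccIH]
          refine ⟨hc, hnd, hlen, ?_⟩
          rcases hor with hmain | hblk
          · left
            refine ⟨hmain.1, hmain.2.1, by rw [hnewOcc, hmain.2.2.1], ?_⟩
            intro v hv hmem
            rcases hmem with ⟨hvo, _⟩ | ⟨_, hvnc⟩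
            · exact hmain.2.2.2 v hv hvo
            · exact hvnc (hkeep v hv)
          · obtain ⟨x, y, hx, hhd, hlast, ho', hm, hnml, hall⟩ := hblk
            right
            have hxl : x ∈ S.wlk n := List.mem_of_mem_head? (by rw [hhd]; rfl)
            have hyl : y ∈ S.wlk n := List.mem_of_mem_getLast? (by rw [hlast]; rfl)
            have hxc : x ∈ Cs := hkeep x hxl
            have hyc : y ∈ Cs := hkeep y hyl
            refine ⟨x, y, Or.inl ⟨hx, hxc⟩, hhd, hlast, ?_, hm, hnml, ?_⟩
            · ext v
              simp only [hnewOcc, ho', Set.mem_union, Set.mem_inter_iff, Set.mem_diff,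
                Set.mem_insert_iff, Set.mem_singleton_iff]
              constructor
              · rintro (⟨(rfl | ⟨hvo, hvx⟩), hvc⟩ | ⟨hvb, hvnc⟩)
                · exact Or.inl rfl
                · exact Or.inr ⟨Or.inl ⟨hvo, hvc⟩, hvx⟩
                · exact Or.inr ⟨Or.inr ⟨hvb, hvnc⟩, fun h => hvnc (h ▸ hxc)⟩
              · rintro (rfl | ⟨(⟨hvo, hvc⟩ | ⟨hvb, hvnc⟩), hvx⟩)
                · exact Or.inl ⟨Or.inl rfl, hyc⟩
                · exact Or.inl ⟨Or.inr ⟨hvo, hvx⟩, hvc⟩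
                · exact Or.inr ⟨hvb, hvnc⟩
            · intro v hvl hvmem
              rcases hvmem with ⟨hvo, _⟩ | ⟨_, hvnc⟩
              · exact hall v hvl hvo
              · exact absurd (hkeep v hvl) hvnc
      · show S'.q + 1 ≤ n + 1 ∧
          ((∃ j < n + 1, ∃ v ∈ S.wlk j, ¬ (GS1 S).Reachable s v) → S'.q + 1 < n + 1)
        refine ⟨by omega, ?_⟩
        rintro ⟨j, hj, v, hv, hvr⟩
        have hjn : j < n := by
          rcases Nat.lt_succ_iff_lt_or_eq.mp hj with h | rfl
          · exact h
          · exact absurd (hkeep v hv) hvr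
        have := himp ⟨j, hjn, v, hv, hvr⟩
        omega
      · show (if S'.q + 1 ≤ S'.q then _ else _) = _
        rw [if_neg (by omega)]
      · show (if S'.q + 1 ≤ S'.q then _ else _) = _
        rw [if_neg (by omega)]
    · -- delete this step
      push_neg at hkeep
      obtain ⟨v0, hv0l, hv0c⟩ := hkeep
      have hnone : ∀ v ∈ S.wlk n, ¬ (GS1 S).Reachable s v := fun v hv hr =>
        hv0c (hr.trans (wlk_reach S hn' v hv v0 hv0l))
      have hblk : ∃ x y, x ∈ S.occ n ∧ (S.wlk n).head? = some x ∧
          (S.wlk n).getLast? = some y ∧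
          S.occ (n+1) = insert y (S.occ n \ {x}) ∧ S.main (n+1) = S.main n ∧
          S.main n ∉ S.wlk n ∧ ∀ v ∈ S.wlk n, v ∈ S.occ n → v = x := by
        rcases hor with hmain | hblk
        · exfalso
          have hmem : S.main n ∈ S.wlk n := List.mem_of_mem_head? (by rw [hmain.1]; rfl)
          exact hnone _ hmem (main_reach S n hn'.le)
        · exact hblk
      obtain ⟨x, y, hx, hhd, hlast, ho', hm, hnml, hall⟩ := hblk
      have hxl : x ∈ S.wlk n := List.mem_of_mem_head? (by rw [hhd]; rfl)
      have hyl : y ∈ S.wlk n := List.mem_of_mem_getLast? (by rw [hlast]; rfl)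
      have hxc := hnone x hxl
      have hyc := hnone y hyl
      refine ⟨S', ⟨by omega, fun _ => by omega⟩, by rw [hm]; exact hmainIH, ?_⟩
      rw [hoccIH]
      congr 1
      ext v
      simp only [ho', Set.mem_inter_iff, Set.mem_insert_iff, Set.mem_diff,
        Set.mem_singleton_iff, Set.mem_setOf_eq]
      constructor
      · rintro ⟨hvo, hvc⟩
        exact ⟨Or.inr ⟨hvo, fun h => hxc (h ▸ hvc)⟩, hvc⟩
      · rintro ⟨(rfl | ⟨hvo, _⟩), hvc⟩
        · exact absurd hvc hyc
        · exact ⟨hvo, hvc⟩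

end Sched

/-- Let `(G, s, t, ℓ, R)` be a YES-instance of CSMP-1 with
`s ≠ t`, let `S` be a solution with the minimum number of moves, and let `G_S` be
the subgraph of `G` consisting of all edges of the paths traversed during `S`.
Then `G_S` is connected and contains at most `ℓ` blocker vertices. -/
theorem solution_graph_connected [Fintype V] (I : OneInst V) (hval : I.Valid)
    (hst : I.s ≠ I.t) (S : Sched1 I.G I.s I.blk) (hsol : Sol1 I S)
    (hmin : ∀ S' : Sched1 I.G I.s I.blk, Sol1 I S' → S.q ≤ S'.q) :
    (GS1 S).support.Nonempty ∧
    (∀ u ∈ (GS1 S).support, ∀ v ∈ (GS1 S).support, (GS1 S).Reachable u v) ∧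
    {v | v ∈ (GS1 S).support ∧ v ∈ I.blk}.ncard ≤ I.ell := by
  classical
  have hq : 0 < S.q := by
    rcases Nat.eq_zero_or_pos S.q with h0 | h
    · exact absurd (S.main0 ▸ h0 ▸ hsol.2) hst
    · exact h
  -- all walks stay in the reachable part of s
  have hall : ∀ j < S.q, ∀ v ∈ S.wlk j, (GS1 S).Reachable I.s v := by
    obtain ⟨S', ⟨hle, himp⟩, hmain', hocc'⟩ := prune S S.q le_rfl
    have hsol' : Sol1 I S' := ⟨hle.trans hsol.1, hmain'.trans hsol.2⟩
    have hge := hmin S' hsol'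
    intro j hj
    by_contra hbad
    push_neg at hbad
    obtain ⟨v, hv, hvr⟩ := hbad
    have := himp ⟨j, hj, v, hv, hvr⟩
    omega
  -- part 1: nonempty support
  have h1 : (GS1 S).support.Nonempty := by
    obtain ⟨hc, hnd, hlen, _⟩ := S.step 0 hq
    have hzne : (S.wlk 0).zip (S.wlk 0).tail ≠ [] := by
      intro h
      have := congrArg List.length h
      rw [List.length_zip, List.length_tail] at this
      simp at this
      omega
    obtain ⟨ab, hab⟩ := List.exists_mem_of_ne_nil _ hzne
    exact ⟨ab.1, SimpleGraph.mem_support _ |>.mpr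
      ⟨ab.2, zip_of_chain' _ (wlk_chain' S hq) ab hab⟩⟩
  refine ⟨h1, ?_, ?_⟩
  · -- part 2: connectivity on support
    intro u hu v hv
    obtain ⟨j, hj, hju⟩ := mem_walk_of_mem_support S hu
    obtain ⟨k, hk, hkv⟩ := mem_walk_of_mem_support S hv
    exact (hall j hj u hju).symm.trans (hall k hk v hkv)
  · -- part 3: blocker count
    have hmap : ∀ v ∈ {v | v ∈ (GS1 S).support ∧ v ∈ I.blk},
        ∃ k < S.q, (S.wlk k).head? = some v := by
      rintro v ⟨hvs, hvb⟩
      obtain ⟨j, hj, hjv⟩ := mem_walk_of_mem_support S hvs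
      exact blk_head S hvb hj hjv
    choose f hf1 hf2 using hmap
    calc {v | v ∈ (GS1 S).support ∧ v ∈ I.blk}.ncard
        ≤ (Set.Iio S.q).ncard := by
          apply Set.ncard_le_ncard_of_injOn (fun v => if h : _ then f v h else 0)
          · intro a ha
            simp only [dif_pos ha]
            exact hf1 a ha
          · intro a ha b hb hab
            simp only [dif_pos ha, dif_pos hb] at hab
            have := hf2 a ha
            rw [hab, hf2 b hb] at this
            exact (Option.some_injective V this).symm
      _ = S.q := by simp [Set.ncard_eq_toFinset_card', Set.toFinset_Iio]
      _ ≤ I.ell := hsol.1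
end
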